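/- arXiv:1810.02414 — 6 statements merged into one kernel-verified Lean document; each statement's English description precedes it below -/
import Mathlib

section
/- For all η, ξ ∈ 𝔤 one has (d/ds)|_{s=0} e^{η+sξ} = e^{η} ∫₀¹ e^{−tη} ξ e^{tη} dt = (∫₀¹ e^{tη} ξ e^{−tη} dt) e^{η}. Consequently, if C: (a,b) → 𝔤 is differentiable, then (d/dt) e^{C(t)} = (∫₀¹ e^{sC(t)} Ċ(t) e^{−sC(t)} ds) e^{C(t)} = e^{C(t)} (∫₀¹ e^{−sC(t)} Ċ(t) e^{sC(t)} ds). -/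
/-- The truncated exponential `e^ξ := Σ_{k=0}^{κ} ξ^k/k!`. -/
noncomputable def expTrunc {A : Type*} [Ring A] [Algebra ℝ A] (κ : ℕ) (ξ : A) : A :=
  ∑ k ∈ Finset.range (κ + 1), ((k.factorial : ℝ))⁻¹ • ξ ^ k

/-!
Duhamel's formula. In any real Banach algebra, with `y = η + sξ`,
`d/dt (e^{-tη} e^{ty}) = s e^{-tη} ξ e^{ty}`; integrating over `[0, 1]` gives
`e^{η+sξ} = e^η + s e^η ∫₀¹ e^{-tη} ξ e^{t(η+sξ)} dt`, and the integral is continuous in `s`,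
so it is the derivative at `s = 0`. On a subspace of elements with `x^{κ+1} = 0` the truncated
exponential is the exponential. The derivative along a curve `C` in `𝔤` then follows from the
chain rule, since `expTrunc κ` is a polynomial map and `Ċ(t)` stays in the closed subspace `𝔤`.
-/

open NormedSpace intervalIntegral Filter Topology

theorem hasDerivAt_of_eq_add_sub_smul {𝕜 E : Type*} [NontriviallyNormedField 𝕜]
    [NormedAddCommGroup E] [NormedSpace 𝕜 E] {f g : 𝕜 → E} {x : 𝕜}
    (hfg : ∀ y, f y = f x + (y - x) • g y) (hg : ContinuousAt g x) : HasDerivAt f (g x) x := by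
  rw [hasDerivAt_iff_tendsto_slope]
  refine (hg.tendsto.mono_left nhdsWithin_le_nhds).congr' ?_
  filter_upwards [self_mem_nhdsWithin] with y hy
  rw [slope_def_module, hfg y, add_sub_cancel_left, smul_smul,
    inv_mul_cancel₀ (sub_ne_zero.mpr hy), one_smul]

theorem HasDerivAt.mem_of_eventually_mem {𝕜 F : Type*} [NontriviallyNormedField 𝕜]
    [NormedAddCommGroup F] [NormedSpace 𝕜 F] {K : Submodule 𝕜 F} (hK : IsClosed (K : Set F))
    {c : 𝕜 → F} {c' : F} {t : 𝕜} (hc : HasDerivAt c c' t) (hmem : ∀ᶠ u in 𝓝 t, c u ∈ K) :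
    c' ∈ K := by
  refine hK.mem_of_tendsto (hasDerivAt_iff_tendsto_slope.mp hc) ?_
  filter_upwards [nhdsWithin_le_nhds hmem] with u hu
  rw [slope_def_module]
  exact K.smul_mem _ (K.sub_mem hu hmem.self_of_nhds)

theorem HasLineDerivAt.hasDerivAt_comp {𝕜 E F : Type*} [NontriviallyNormedField 𝕜]
    [NormedAddCommGroup E] [NormedSpace 𝕜 E] [NormedAddCommGroup F] [NormedSpace 𝕜 F]
    {f : E → F} {L : F} {c : 𝕜 → E} {c' : E} {t : 𝕜}
    (hL : HasLineDerivAt 𝕜 f L (c t) c') (hf : DifferentiableAt 𝕜 f (c t))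
    (hc : HasDerivAt c c' t) : HasDerivAt (fun u => f (c u)) L t :=
  hL.unique (hf.hasFDerivAt.hasLineDerivAt c') ▸ hf.hasFDerivAt.comp_hasDerivAt t hc

section ExpNeg

variable {𝔸 : Type*} [NormedRing 𝔸] [NormedAlgebra ℚ 𝔸] [CompleteSpace 𝔸]

theorem exp_mul_exp_neg (x : 𝔸) : exp x * exp (-x) = 1 := by
  rw [← exp_add_of_commute (Commute.refl x).neg_right, add_neg_cancel, exp_zero]

theorem exp_neg_mul_exp (x : 𝔸) : exp (-x) * exp x = 1 := by
  rw [← exp_add_of_commute (Commute.refl x).neg_left, neg_add_cancel, exp_zero]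

end ExpNeg

section Duhamel

variable {𝔸 : Type*} [NormedRing 𝔸] [NormedAlgebra ℝ 𝔸] [NormedAlgebra ℚ 𝔸] [CompleteSpace 𝔸]

theorem exp_add_smul_eq_left (η ξ : 𝔸) (s : ℝ) :
    exp (η + s • ξ) = exp η +
      s • (exp η * ∫ t in (0:ℝ)..1, exp (-(t • η)) * ξ * exp (t • (η + s • ξ))) := by
  have hderiv : ∀ t : ℝ, HasDerivAt (fun t : ℝ => exp (-(t • η)) * exp (t • (η + s • ξ)))
      (s • (exp (-(t • η)) * ξ * exp (t • (η + s • ξ)))) t := by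
    intro t
    have hneg := hasDerivAt_exp_smul_const (-η) t
    simp only [smul_neg] at hneg
    convert hneg.fun_mul (hasDerivAt_exp_smul_const' (η + s • ξ) t) using 1
    simp only [mul_add, add_mul, smul_mul_assoc, mul_smul_comm, mul_neg, neg_mul, mul_assoc]
    abel
  have hFTC := integral_eq_sub_of_hasDerivAt (fun t _ => hderiv t)
    (Continuous.intervalIntegrable (by fun_prop) 0 1)
  rw [integral_smul] at hFTC
  simp only [one_smul, zero_smul, neg_zero, exp_zero, mul_one] at hFTC
  rw [← mul_smul_comm, hFTC, mul_sub, ← mul_assoc, exp_mul_exp_neg, one_mul, mul_one,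
    add_sub_cancel]

theorem exp_add_smul_eq_right (η ξ : 𝔸) (s : ℝ) :
    exp (η + s • ξ) = exp η +
      s • ((∫ t in (0:ℝ)..1, exp (t • (η + s • ξ)) * ξ * exp (-(t • η))) * exp η) := by
  have hderiv : ∀ t : ℝ, HasDerivAt (fun t : ℝ => exp (t • (η + s • ξ)) * exp (-(t • η)))
      (s • (exp (t • (η + s • ξ)) * ξ * exp (-(t • η)))) t := by
    intro t
    have hneg := hasDerivAt_exp_smul_const' (-η) t
    simp only [smul_neg] at hneg
    convert (hasDerivAt_exp_smul_const (η + s • ξ) t).fun_mul hneg using 1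
    simp only [mul_add, add_mul, smul_mul_assoc, mul_smul_comm, mul_neg, neg_mul, mul_assoc]
    abel
  have hFTC := integral_eq_sub_of_hasDerivAt (fun t _ => hderiv t)
    (Continuous.intervalIntegrable (by fun_prop) 0 1)
  rw [integral_smul] at hFTC
  simp only [one_smul, zero_smul, neg_zero, exp_zero, mul_one] at hFTC
  rw [← smul_mul_assoc, hFTC, sub_mul, mul_assoc, exp_neg_mul_exp, one_mul, mul_one,
    add_sub_cancel]

theorem hasLineDerivAt_exp_left (η ξ : 𝔸) :
    HasLineDerivAt ℝ exp (exp η * ∫ t in (0:ℝ)..1, exp (-(t • η)) * ξ * exp (t • η)) η ξ := by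
  have hg : Continuous fun s : ℝ =>
      exp η * ∫ t in (0:ℝ)..1, exp (-(t • η)) * ξ * exp (t • (η + s • ξ)) :=
    continuous_const.mul (continuous_parametric_intervalIntegral_of_continuous' (by fun_prop) 0 1)
  simpa [HasLineDerivAt] using hasDerivAt_of_eq_add_sub_smul (x := 0)
    (fun s => by simpa using exp_add_smul_eq_left η ξ s) hg.continuousAt

theorem hasLineDerivAt_exp_right (η ξ : 𝔸) :
    HasLineDerivAt ℝ exp ((∫ t in (0:ℝ)..1, exp (t • η) * ξ * exp (-(t • η))) * exp η) η ξ := by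
  have hg : Continuous fun s : ℝ =>
      (∫ t in (0:ℝ)..1, exp (t • (η + s • ξ)) * ξ * exp (-(t • η))) * exp η :=
    (continuous_parametric_intervalIntegral_of_continuous' (by fun_prop) 0 1).mul continuous_const
  simpa [HasLineDerivAt] using hasDerivAt_of_eq_add_sub_smul (x := 0)
    (fun s => by simpa using exp_add_smul_eq_right η ξ s) hg.continuousAt

end Duhamel

section Truncated

variable {A : Type*} [NormedRing A] [NormedAlgebra ℝ A]

theorem differentiable_expTrunc (κ : ℕ) : Differentiable ℝ (expTrunc κ : A → A) := by
  unfold expTrunc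
  fun_prop

theorem expTrunc_eq_exp [CompleteSpace A] {κ : ℕ} {x : A} (hx : x ^ (κ + 1) = 0) :
    expTrunc κ x = exp x := by
  rw [exp_eq_tsum ℝ]
  refine (tsum_eq_sum fun k hk => ?_).symm
  rw [pow_eq_zero_of_le (by simpa using hk) hx, smul_zero]

end Truncated

section NilpotentSubmodule

variable {A : Type*} [NormedRing A] [NormedAlgebra ℝ A] [NormedAlgebra ℚ A] [CompleteSpace A]
  {κ : ℕ} {V : Submodule ℝ A}

theorem hasLineDerivAt_expTrunc_left (hV : ∀ x ∈ V, x ^ (κ + 1) = 0) {η ξ : A}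
    (hη : η ∈ V) (hξ : ξ ∈ V) :
    HasLineDerivAt ℝ (expTrunc κ)
      (expTrunc κ η * ∫ t in (0:ℝ)..1, expTrunc κ (-(t • η)) * ξ * expTrunc κ (t • η)) η ξ := by
  have hexp : ∀ x ∈ V, expTrunc κ x = exp x := fun x hx => expTrunc_eq_exp (hV x hx)
  have hline : (fun s : ℝ => expTrunc κ (η + s • ξ)) = fun s => exp (η + s • ξ) :=
    funext fun s => hexp _ (V.add_mem hη (V.smul_mem s hξ))
  simp only [HasLineDerivAt, hline, hexp _ hη, hexp _ (V.smul_mem _ hη),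
    hexp _ (V.neg_mem (V.smul_mem _ hη))]
  exact hasLineDerivAt_exp_left η ξ

theorem hasLineDerivAt_expTrunc_right (hV : ∀ x ∈ V, x ^ (κ + 1) = 0) {η ξ : A}
    (hη : η ∈ V) (hξ : ξ ∈ V) :
    HasLineDerivAt ℝ (expTrunc κ)
      ((∫ t in (0:ℝ)..1, expTrunc κ (t • η) * ξ * expTrunc κ (-(t • η))) * expTrunc κ η) η ξ := by
  have hexp : ∀ x ∈ V, expTrunc κ x = exp x := fun x hx => expTrunc_eq_exp (hV x hx)
  have hline : (fun s : ℝ => expTrunc κ (η + s • ξ)) = fun s => exp (η + s • ξ) :=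
    funext fun s => hexp _ (V.add_mem hη (V.smul_mem s hξ))
  simp only [HasLineDerivAt, hline, hexp _ hη, hexp _ (V.smul_mem _ hη),
    hexp _ (V.neg_mem (V.smul_mem _ hη))]
  exact hasLineDerivAt_exp_right η ξ

end NilpotentSubmodule

theorem stmt2_general {A : Type*} [NormedRing A] [NormedAlgebra ℝ A] [FiniteDimensional ℝ A]
    (κ : ℕ) (𝔤 : Submodule ℝ A)
    (hnil : ∀ f : Fin (κ + 1) → A, (∀ i, f i ∈ 𝔤) → (List.ofFn f).prod = 0) :
    (∀ η ∈ 𝔤, ∀ ξ ∈ 𝔤,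
      HasDerivAt (fun s : ℝ => expTrunc κ (η + s • ξ))
        (expTrunc κ η * ∫ t in (0:ℝ)..1,
          expTrunc κ (-(t • η)) * ξ * expTrunc κ (t • η)) 0 ∧
      HasDerivAt (fun s : ℝ => expTrunc κ (η + s • ξ))
        ((∫ t in (0:ℝ)..1, expTrunc κ (t • η) * ξ * expTrunc κ (-(t • η)))
          * expTrunc κ η) 0) ∧
    (∀ (a b : ℝ) (C C' : ℝ → A), (∀ t ∈ Set.Ioo a b, C t ∈ 𝔤) →
      ∀ t ∈ Set.Ioo a b, HasDerivAt C (C' t) t →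
        HasDerivAt (fun u => expTrunc κ (C u))
          ((∫ s in (0:ℝ)..1, expTrunc κ (s • C t) * C' t * expTrunc κ (-(s • C t)))
            * expTrunc κ (C t)) t ∧
        HasDerivAt (fun u => expTrunc κ (C u))
          (expTrunc κ (C t) *
            ∫ s in (0:ℝ)..1, expTrunc κ (-(s • C t)) * C' t * expTrunc κ (s • C t)) t) := by
  let _ : NormedAlgebra ℚ A := .restrictScalars ℚ ℝ A
  have : CompleteSpace A := FiniteDimensional.complete ℝ A
  have hpow : ∀ x ∈ 𝔤, x ^ (κ + 1) = 0 := fun x hx => by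
    simpa [pow_succ'] using hnil (fun _ => x) fun _ => hx
  refine ⟨fun η hη ξ hξ => ⟨hasLineDerivAt_expTrunc_left hpow hη hξ,
    hasLineDerivAt_expTrunc_right hpow hη hξ⟩, fun a b C C' hC t ht hCt => ?_⟩
  have hC' : C' t ∈ 𝔤 := hCt.mem_of_eventually_mem 𝔤.closed_of_finiteDimensional
    (eventually_of_mem (isOpen_Ioo.mem_nhds ht) hC)
  exact ⟨(hasLineDerivAt_expTrunc_right hpow (hC t ht) hC').hasDerivAt_comp
      (differentiable_expTrunc κ _) hCt,
    (hasLineDerivAt_expTrunc_left hpow (hC t ht) hC').hasDerivAt_comp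
      (differentiable_expTrunc κ _) hCt⟩

/-- for `η, ξ ∈ 𝔤`,
`(d/ds)|₀ e^{η+sξ} = e^η ∫₀¹ e^{−tη} ξ e^{tη} dt = (∫₀¹ e^{tη} ξ e^{−tη} dt) e^η`,
and consequently, if `C : (a,b) → 𝔤` is differentiable then
`(d/dt) e^{C(t)} = (∫₀¹ e^{sC(t)} Ċ(t) e^{−sC(t)} ds) e^{C(t)}
                = e^{C(t)} (∫₀¹ e^{−sC(t)} Ċ(t) e^{sC(t)} ds)`. -/
theorem stmt2 {A : Type*} [NormedRing A] [NormedAlgebra ℝ A] [FiniteDimensional ℝ A]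
    (κ : ℕ) (𝔤 : Submodule ℝ A)
    (hmul : ∀ x ∈ 𝔤, ∀ y ∈ 𝔤, x * y ∈ 𝔤)
    (hcompl : IsCompl (Submodule.span ℝ ({1} : Set A)) 𝔤)
    (hnil : ∀ f : Fin (κ + 1) → A, (∀ i, f i ∈ 𝔤) → (List.ofFn f).prod = 0) :
    (∀ η ∈ 𝔤, ∀ ξ ∈ 𝔤,
      HasDerivAt (fun s : ℝ => expTrunc κ (η + s • ξ))
        (expTrunc κ η * ∫ t in (0:ℝ)..1,
          expTrunc κ (-(t • η)) * ξ * expTrunc κ (t • η)) 0 ∧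
      HasDerivAt (fun s : ℝ => expTrunc κ (η + s • ξ))
        ((∫ t in (0:ℝ)..1, expTrunc κ (t • η) * ξ * expTrunc κ (-(t • η)))
          * expTrunc κ η) 0) ∧
    (∀ (a b : ℝ) (C C' : ℝ → A), (∀ t ∈ Set.Ioo a b, C t ∈ 𝔤) →
      ∀ t ∈ Set.Ioo a b, HasDerivAt C (C' t) t →
        HasDerivAt (fun u => expTrunc κ (C u))
          ((∫ s in (0:ℝ)..1, expTrunc κ (s • C t) * C' t * expTrunc κ (-(s • C t)))
            * expTrunc κ (C t)) t ∧
        HasDerivAt (fun u => expTrunc κ (C u))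
          (expTrunc κ (C t) *
            ∫ s in (0:ℝ)..1, expTrunc κ (-(s • C t)) * C' t * expTrunc κ (s • C t)) t) :=
  stmt2_general κ 𝔤 hnil
end

section
/- Let g: (a,b) → G be continuously differentiable, set ξ̇(t) := g(t)⁻¹ ġ(t) (which lies in 𝔤) and C(t) := log(g(t)) ∈ 𝔤. Then C is continuously differentiable and for every t ∈ (a,b): Σ_{n=0}^{κ−1} ((−1)^n/(n+1)!) ad_{C(t)}^n Ċ(t) = ξ̇(t); equivalently ∫₀¹ e^{−sC(t)} Ċ(t) e^{sC(t)} ds = ξ̇(t). -/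
/-- The truncated logarithm `log(1+ξ) := Σ_{k=1}^{κ} ((−1)^{k+1}/k) ξ^k`. -/
noncomputable def logTrunc {A : Type*} [Ring A] [Algebra ℝ A] (κ : ℕ) (ξ : A) : A :=
  ∑ k ∈ Finset.Icc 1 κ, (((-1 : ℝ) ^ (k + 1)) / k) • ξ ^ k

/-!
Because `𝔤 ^ (κ + 1) = 0`, the truncated series behave like the full ones: for `y ∈ 𝔤` the
curve `s ↦ e^{s y}` has derivative `y e^{s y}`, so `e^y e^{-y} = 1` and
`e^{-s x} w e^{s x} = e^{-s ad_x} w` follow from "zero derivative implies constant".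
The identity `e^{log (1 + X)} ≡ 1 + X mod X^{κ+1}` holds because `F = e^{log (1 + X)}` solves
`(1 + X) F' = F` modulo `X^κ`; hence `g = e^C` and `ġ = dexp_C Ċ`. Finally
`F(s) = e^{-s C} ∂_ε e^{s (C + ε Ċ)}|_{ε=0}` vanishes at `0` and has derivative
`e^{-s C} Ċ e^{s C}`, which gives the integral formula at `s = 1`, and integrating
`e^{-s ad_C} Ċ` termwise gives the series.
-/

open Finset

section Ring

variable {A : Type*} [Ring A]

/-- The derivative of `y ↦ y ^ k` at `x` in the direction `w`, in the form of `HasDerivAt.pow'`. -/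
def dpow (k : ℕ) (x w : A) : A :=
  ∑ i ∈ range k, x ^ (k.pred - i) * w * x ^ i

lemma dpow_succ (k : ℕ) (x w : A) : dpow (k + 1) x w = x * dpow k x w + w * x ^ k := by
  rw [dpow, sum_range_succ, Nat.pred_succ, Nat.sub_self, pow_zero, one_mul, dpow, mul_sum]
  congr 1
  refine sum_congr rfl fun i hi => ?_
  have hi : i < k := mem_range.1 hi
  rw [← mul_assoc, ← mul_assoc, ← pow_succ']
  congr 3
  rw [Nat.pred_eq_sub_one]
  omega

end Ring

section Algebraic

variable {A B : Type*} [Ring A] [Algebra ℝ A] [Ring B] [Algebra ℝ B] {κ : ℕ}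

@[simp]
lemma expTrunc_zero : expTrunc κ (0 : A) = 1 := by
  simp [expTrunc, sum_range_succ']

lemma AlgHom.map_expTrunc (φ : A →ₐ[ℝ] B) (a : A) : φ (expTrunc κ a) = expTrunc κ (φ a) := by
  simp [expTrunc, map_sum, map_smul, map_pow]

lemma AlgHom.map_logTrunc (φ : A →ₐ[ℝ] B) (a : A) : φ (logTrunc κ a) = logTrunc κ (φ a) := by
  simp [logTrunc, map_sum, map_smul, map_pow]

lemma Commute.expTrunc_right {a b : A} (h : Commute a b) : Commute a (expTrunc κ b) :=
  Commute.sum_right _ _ _ fun k _ => (h.pow_right k).smul_right _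

/-- The derivative of `expTrunc κ` at `x` in the direction `w`. -/
noncomputable def dexpTrunc (κ : ℕ) (x w : A) : A :=
  ∑ k ∈ range (κ + 1), (k.factorial : ℝ)⁻¹ • dpow k x w

lemma iterate_sub_mul_eq_neg_one_pow_smul (x w : A) (n : ℕ) :
    (fun y => y * x - x * y)^[n] w = (-1 : ℝ) ^ n • (fun y => x * y - y * x)^[n] w := by
  induction n with
  | zero => simp
  | succ n ih =>
    rw [Function.iterate_succ_apply', Function.iterate_succ_apply', ih, pow_succ, mul_smul,
      smul_mul_assoc, mul_smul_comm, ← smul_sub, neg_one_smul, neg_sub]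

end Algebraic

section Filtration

variable {A : Type*} [Ring A] [Algebra ℝ A] {κ : ℕ} {𝔤 : Submodule ℝ A}

lemma Submodule.pow_eq_bot_of_forall_prod_eq_zero {n : ℕ}
    (h : ∀ f : Fin n → A, (∀ i, f i ∈ 𝔤) → (List.ofFn f).prod = 0) : 𝔤 ^ n = ⊥ := by
  rw [Submodule.pow_eq_span_pow_set, Submodule.span_eq_bot]
  intro a ha
  obtain ⟨f, rfl⟩ := Set.mem_pow.1 ha
  exact h _ fun i => (f i).2

lemma Submodule.eq_zero_of_mem_pow {n m : ℕ} (h𝔤 : 𝔤 ^ n = ⊥) (hnm : n ≤ m) {y : A}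
    (hy : y ∈ 𝔤 ^ m) : y = 0 := by
  rwa [← Nat.add_sub_cancel' hnm, pow_add, h𝔤, Submodule.bot_mul, Submodule.mem_bot] at hy

lemma Submodule.pow_succ_le_self (h𝔤 : 𝔤 * 𝔤 ≤ 𝔤) (n : ℕ) : 𝔤 ^ (n + 1) ≤ 𝔤 := by
  induction n with
  | zero => simp
  | succ n ih => exact (pow_succ 𝔤 (n + 1)).trans_le ((mul_le_mul_left ih 𝔤).trans h𝔤)

lemma dpow_mem_pow {x w : A} (hx : x ∈ 𝔤) (hw : w ∈ 𝔤) (k : ℕ) : dpow k x w ∈ 𝔤 ^ k := by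
  refine Submodule.sum_mem _ fun i hi => ?_
  have hk : k.pred - i + 1 + i = k := by rw [Nat.pred_eq_sub_one]; have := mem_range.1 hi; omega
  have := Submodule.mul_mem_mul
    (Submodule.mul_mem_mul (Submodule.pow_mem_pow _ hx (k.pred - i)) hw)
    (Submodule.pow_mem_pow _ hx i)
  rwa [← pow_succ, ← pow_add, hk] at this

lemma iterate_sub_mul_mem_pow {x w : A} (hx : x ∈ 𝔤) (hw : w ∈ 𝔤) (n : ℕ) :
    (fun y => y * x - x * y)^[n] w ∈ 𝔤 ^ (n + 1) := by
  induction n with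
  | zero => simpa using hw
  | succ n ih =>
    rw [Function.iterate_succ_apply']
    exact Submodule.sub_mem _ (pow_succ 𝔤 (n + 1) ▸ Submodule.mul_mem_mul ih hx)
      (pow_succ' 𝔤 (n + 1) ▸ Submodule.mul_mem_mul hx ih)

lemma logTrunc_mem (h𝔤 : 𝔤 * 𝔤 ≤ 𝔤) {ξ : A} (hξ : ξ ∈ 𝔤) : logTrunc κ ξ ∈ 𝔤 := by
  refine Submodule.sum_mem _ fun k hk => 𝔤.smul_mem _ ?_
  obtain ⟨j, rfl⟩ := Nat.exists_eq_add_of_le' (Finset.mem_Icc.1 hk).1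
  exact Submodule.pow_succ_le_self h𝔤 j (Submodule.pow_mem_pow _ hξ _)

end Filtration

namespace Polynomial

lemma X_pow_succ_dvd_of_X_pow_dvd_one_add_X_mul_derivative_sub {K : Type*} [Field K] [CharZero K]
    {G : K[X]} {n : ℕ}
    (hG : X ^ n ∣ (1 + X) * derivative G - G) (h0 : G.coeff 0 = 0) : X ^ (n + 1) ∣ G := by
  rw [X_pow_dvd_iff] at hG ⊢
  intro d hd
  induction d with
  | zero => exact h0
  | succ d ih =>
    have hcoeff := hG d (by omega)
    have hXG : (X * derivative G).coeff d = d * G.coeff d := by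
      cases d <;> simp [coeff_derivative, mul_comm]
    rw [coeff_sub, add_mul, one_mul, coeff_add, hXG, coeff_derivative, ih (by omega)] at hcoeff
    simpa [Nat.cast_add_one_ne_zero] using hcoeff

lemma X_dvd_logTrunc (κ : ℕ) : (X : ℝ[X]) ∣ logTrunc κ X :=
  Finset.dvd_sum fun k hk => by
    rw [smul_eq_C_mul]
    exact dvd_mul_of_dvd_right (dvd_pow_self X (by have := (Finset.mem_Icc.1 hk).1; omega)) _

lemma one_add_X_mul_derivative_logTrunc (κ : ℕ) :
    (1 + X) * derivative (logTrunc κ (X : ℝ[X])) = 1 - (-X) ^ κ := by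
  rw [← sub_neg_eq_add, ← mul_neg_geom_sum]
  congr 1
  rw [logTrunc, map_sum, ← Finset.Ico_add_one_right_eq_Icc, Finset.sum_Ico_eq_sum_range,
    Nat.add_sub_cancel]
  refine Finset.sum_congr rfl fun m _ => ?_
  have hcoeff : (-1 : ℝ) ^ (1 + m + 1) / ((1 + m : ℕ) : ℝ) * ((1 + m : ℕ) : ℝ) = (-1) ^ m := by
    field_simp
    ring
  rw [derivative_smul, derivative_X_pow, Nat.add_sub_cancel_left, smul_eq_C_mul, ← mul_assoc,
    ← C_mul, hcoeff, neg_pow (X : ℝ[X]), map_pow, map_neg, map_one]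

lemma derivative_expTrunc_X (κ : ℕ) :
    derivative (expTrunc κ (X : ℝ[X])) = ∑ k ∈ Finset.range κ, (k.factorial : ℝ)⁻¹ • X ^ k := by
  rw [expTrunc, map_sum, Finset.sum_range_succ']
  simp only [derivative_smul, derivative_X_pow, Nat.cast_zero, map_zero, zero_mul, smul_zero,
    add_zero, Nat.add_sub_cancel]
  refine Finset.sum_congr rfl fun k _ => ?_
  rw [← smul_eq_C_mul, smul_smul, Nat.factorial_succ]
  congr 1
  push_cast
  field_simp

lemma X_pow_succ_dvd_expTrunc_logTrunc_sub (κ : ℕ) :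
    (X : ℝ[X]) ^ (κ + 1) ∣ expTrunc κ (logTrunc κ X) - (1 + X) := by
  set L := logTrunc κ (X : ℝ[X])
  have hcomp : expTrunc κ L = (expTrunc κ X).comp L := by
    rw [comp_eq_aeval, AlgHom.map_expTrunc, aeval_X]
  set P := ∑ k ∈ Finset.range κ, (k.factorial : ℝ)⁻¹ • (X : ℝ[X]) ^ k
  have hsplit : expTrunc κ (X : ℝ[X]) = P + (κ.factorial : ℝ)⁻¹ • X ^ κ :=
    Finset.sum_range_succ _ _
  apply X_pow_succ_dvd_of_X_pow_dvd_one_add_X_mul_derivative_sub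
  · have key : (1 + X) * derivative (expTrunc κ L - (1 + X)) - (expTrunc κ L - (1 + X))
        = -((-X) ^ κ * P.comp L) - (κ.factorial : ℝ)⁻¹ • L ^ κ := by
      rw [hcomp, derivative_sub, derivative_comp, derivative_expTrunc_X, hsplit, add_comp,
        smul_comp, X_pow_comp]
      simp only [derivative_add, derivative_one, derivative_X, zero_add]
      linear_combination (P.comp L) * one_add_X_mul_derivative_logTrunc κ
    rw [key, neg_pow, smul_eq_C_mul]
    exact dvd_sub (dvd_neg.2 (dvd_mul_of_dvd_left (dvd_mul_left _ _) _))
      (dvd_mul_of_dvd_right (pow_dvd_pow_of_dvd (X_dvd_logTrunc κ) κ) _)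
  · have hL0 : L.eval 0 = 0 := by
      rw [← coeff_zero_eq_eval_zero, ← X_dvd_iff]
      exact X_dvd_logTrunc κ
    have hF0 : (expTrunc κ L).eval 0 = 1 := by
      rw [← coe_aeval_eq_eval, AlgHom.map_expTrunc, coe_aeval_eq_eval, hL0, expTrunc_zero]
    simp [coeff_zero_eq_eval_zero, hF0]

end Polynomial

lemma expTrunc_logTrunc {A : Type*} [Ring A] [Algebra ℝ A] {κ : ℕ} {ξ : A}
    (hξ : ξ ^ (κ + 1) = 0) : expTrunc κ (logTrunc κ ξ) = 1 + ξ := by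
  obtain ⟨q, hq⟩ := Polynomial.X_pow_succ_dvd_expTrunc_logTrunc_sub κ
  have := congrArg (Polynomial.aeval ξ) hq
  rwa [map_sub, map_mul, map_pow, AlgHom.map_expTrunc, AlgHom.map_logTrunc, map_add, map_one,
    Polynomial.aeval_X, hξ, zero_mul, sub_eq_zero] at this

section Analytic

variable {E : Type*} [NormedAddCommGroup E] [NormedSpace ℝ E]

lemma hasDerivAt_sum_factorial_smul (N : ℕ) (c : ℕ → E) (s : ℝ) :
    HasDerivAt (fun s : ℝ => ∑ k ∈ range (N + 1), (k.factorial : ℝ)⁻¹ • s ^ k • c k)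
      (∑ k ∈ range N, (k.factorial : ℝ)⁻¹ • s ^ k • c (k + 1)) s := by
  convert HasDerivAt.fun_sum (u := range (N + 1)) fun k _ =>
    ((hasDerivAt_pow k s).smul_const (c k)).fun_const_smul (k.factorial : ℝ)⁻¹ using 1
  rw [sum_range_succ']
  simp only [CharP.cast_eq_zero, zero_mul, zero_smul, smul_zero, add_zero, smul_smul]
  refine sum_congr rfl fun k _ => ?_
  rw [Nat.factorial_succ, Nat.add_sub_cancel]
  push_cast
  field_simp

lemma integral_sum_factorial_smul [CompleteSpace E] (N : ℕ) (c : ℕ → E) :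
    ∫ s in (0 : ℝ)..1, ∑ k ∈ range (N + 1), (k.factorial : ℝ)⁻¹ • s ^ k • c k
      = ∑ k ∈ range (N + 1), ((k + 1).factorial : ℝ)⁻¹ • c k := by
  rw [intervalIntegral.integral_finsetSum fun k _ =>
    (by fun_prop : Continuous _).intervalIntegrable 0 1]
  refine sum_congr rfl fun k _ => ?_
  rw [intervalIntegral.integral_smul, intervalIntegral.integral_smul_const, integral_pow,
    smul_smul, Nat.factorial_succ]
  push_cast
  field_simp
  simp

lemma deriv_mem_of_forall_mem {𝕜 F : Type*} [NontriviallyNormedField 𝕜] [NormedAddCommGroup F]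
    [NormedSpace 𝕜 F] {f : 𝕜 → F} {U : Set 𝕜} (hU : IsOpen U) {S : Submodule 𝕜 F}
    (hS : IsClosed (S : Set F)) (hf : ∀ u ∈ U, f u ∈ S) {t : 𝕜} (ht : t ∈ U) : deriv f t ∈ S := by
  rw [← derivWithin_of_isOpen hU ht]
  refine closure_minimal (Submodule.span_le.2 (Set.image_subset_iff.2 hf)) hS
    (range_derivWithin_subset_closure_span_image f (t := U) ?_ ⟨t, rfl⟩)
  simpa using subset_closure

end Analytic

section NormedAlgebra

variable {A : Type*} [NormedRing A] [NormedAlgebra ℝ A] {κ : ℕ}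

lemma ContDiffOn.logTrunc {E : Type*} [NormedAddCommGroup E] [NormedSpace ℝ E] {n : WithTop ℕ∞}
    {f : E → A} {s : Set E} (hf : ContDiffOn ℝ n f s) :
    ContDiffOn ℝ n (fun t => logTrunc κ (f t)) s :=
  ContDiffOn.sum fun k _ => (hf.pow k).const_smul _

lemma HasDerivAt.expTrunc {f : ℝ → A} {f' : A} {t : ℝ} (hf : HasDerivAt f f' t) :
    HasDerivAt (fun u => expTrunc κ (f u)) (dexpTrunc κ (f t) f') t := by
  unfold _root_.expTrunc dexpTrunc dpow
  exact HasDerivAt.fun_sum fun k _ => (hf.fun_pow' k).fun_const_smul _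

lemma hasDerivAt_expTrunc_smul {y : A} (hy : y ^ (κ + 1) = 0) (s : ℝ) :
    HasDerivAt (fun s : ℝ => expTrunc κ (s • y)) (y * expTrunc κ (s • y)) s := by
  simp only [expTrunc, smul_pow]
  refine (hasDerivAt_sum_factorial_smul κ (y ^ ·) s).congr_deriv ?_
  rw [mul_sum, sum_range_succ, mul_smul_comm, mul_smul_comm, ← pow_succ', hy]
  simp [pow_succ']

lemma hasDerivAt_expTrunc_neg_smul {y : A} (hy : y ^ (κ + 1) = 0) (s : ℝ) :
    HasDerivAt (fun s : ℝ => expTrunc κ (-(s • y))) (-y * expTrunc κ (-(s • y))) s := by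
  simpa using hasDerivAt_expTrunc_smul (y := -y) (by rw [neg_pow, hy, mul_zero]) s

lemma expTrunc_mul_expTrunc_neg {y : A} (hy : y ^ (κ + 1) = 0) :
    expTrunc κ y * expTrunc κ (-y) = 1 := by
  have hderiv (s : ℝ) :=
    (hasDerivAt_expTrunc_smul hy s).fun_mul (hasDerivAt_expTrunc_neg_smul hy s)
  have hzero (s : ℝ) : y * expTrunc κ (s • y) * expTrunc κ (-(s • y))
      + expTrunc κ (s • y) * (-y * expTrunc κ (-(s • y))) = 0 := by
    rw [((Commute.refl y).smul_right s).expTrunc_right.eq, ← mul_assoc, mul_neg, neg_mul,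
      add_neg_cancel]
  simpa using is_const_of_deriv_eq_zero (fun s => (hderiv s).differentiableAt)
    (fun s => (hderiv s).deriv.trans (hzero s)) 1 0

lemma Ring.inverse_expTrunc {y : A} (hy : y ^ (κ + 1) = 0) :
    Ring.inverse (expTrunc κ y) = expTrunc κ (-y) :=
  Ring.inverse_unit ⟨_, _, expTrunc_mul_expTrunc_neg hy,
    by simpa using expTrunc_mul_expTrunc_neg (y := -y) (by rw [neg_pow, hy, mul_zero])⟩

end NormedAlgebra

section Nilpotent

variable {A : Type*} [NormedRing A] [NormedAlgebra ℝ A] {κ : ℕ} {𝔤 : Submodule ℝ A}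

lemma pow_succ_eq_zero_of_mem (h𝔤 : 𝔤 ^ (κ + 1) = ⊥) {y : A} (hy : y ∈ 𝔤) : y ^ (κ + 1) = 0 :=
  Submodule.eq_zero_of_mem_pow h𝔤 le_rfl (Submodule.pow_mem_pow _ hy _)

lemma expTrunc_neg_smul_mul_mul_expTrunc_smul (h𝔤 : 𝔤 ^ (κ + 1) = ⊥) {x w : A} (hx : x ∈ 𝔤)
    (hw : w ∈ 𝔤) (s : ℝ) :
    expTrunc κ (-(s • x)) * w * expTrunc κ (s • x)
      = ∑ n ∈ range (κ + 1), (n.factorial : ℝ)⁻¹ • s ^ n • (fun y => y * x - x * y)^[n] w := by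
  set M := fun s : ℝ =>
    ∑ n ∈ range (κ + 1), (n.factorial : ℝ)⁻¹ • s ^ n • (fun y => y * x - x * y)^[n] w
  have hx' := pow_succ_eq_zero_of_mem h𝔤 hx
  have hM (s : ℝ) : HasDerivAt M (M s * x - x * M s) s := by
    refine (hasDerivAt_sum_factorial_smul κ _ s).congr_deriv ?_
    have hstep (n : ℕ) : (fun y => y * x - x * y)^[n] w * x - x * (fun y => y * x - x * y)^[n] w
        = (fun y => y * x - x * y)^[n + 1] w := by rw [Function.iterate_succ_apply']
    have hlast : (fun y => y * x - x * y)^[κ + 1] w = 0 :=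
      Submodule.eq_zero_of_mem_pow h𝔤 (by omega) (iterate_sub_mul_mem_pow hx hw (κ + 1))
    simp only [M, sum_mul, mul_sum, ← sum_sub_distrib, smul_mul_assoc, mul_smul_comm, ← smul_sub,
      hstep]
    rw [sum_range_succ, hlast, smul_zero, smul_zero, add_zero]
  have hH (s : ℝ) :
      HasDerivAt (fun s => expTrunc κ (s • x) * M s * expTrunc κ (-(s • x))) 0 s := by
    refine (((hasDerivAt_expTrunc_smul hx' s).fun_mul (hM s)).fun_mul
      (hasDerivAt_expTrunc_neg_smul hx' s)).congr_deriv ?_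
    rw [((Commute.refl x).smul_right s).expTrunc_right.eq]
    noncomm_ring
  have hconst := is_const_of_deriv_eq_zero (fun s => (hH s).differentiableAt)
    (fun s => (hH s).deriv) s 0
  have hinv : expTrunc κ (-(s • x)) * expTrunc κ (s • x) = 1 := by
    simpa using expTrunc_mul_expTrunc_neg
      (pow_succ_eq_zero_of_mem h𝔤 (𝔤.neg_mem (𝔤.smul_mem s hx)))
  have hH0 : expTrunc κ ((0 : ℝ) • x) * M 0 * expTrunc κ (-((0 : ℝ) • x)) = w := by
    simp [M, sum_range_succ']
  calc expTrunc κ (-(s • x)) * w * expTrunc κ (s • x)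
      = expTrunc κ (-(s • x)) * (expTrunc κ (s • x) * M s * expTrunc κ (-(s • x)))
          * expTrunc κ (s • x) := by rw [hconst, hH0]
    _ = M s := by simp only [← mul_assoc, hinv, one_mul]; rw [mul_assoc, hinv, mul_one]

lemma expTrunc_neg_mul_dexpTrunc [CompleteSpace A] (h𝔤 : 𝔤 ^ (κ + 1) = ⊥) {x w : A} (hx : x ∈ 𝔤)
    (hw : w ∈ 𝔤) :
    expTrunc κ (-x) * dexpTrunc κ x w
      = ∫ s in (0 : ℝ)..1, expTrunc κ (-(s • x)) * w * expTrunc κ (s • x) := by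
  -- `S s` is the derivative of `ε ↦ e^{s (x + ε w)}` at `ε = 0`.
  set S := fun s : ℝ => ∑ k ∈ range (κ + 1), (k.factorial : ℝ)⁻¹ • s ^ k • dpow k x w
  have hx' := pow_succ_eq_zero_of_mem h𝔤 hx
  have hS (s : ℝ) : HasDerivAt S (x * S s + w * expTrunc κ (s • x)) s := by
    refine (hasDerivAt_sum_factorial_smul κ _ s).congr_deriv ?_
    have hlast : dpow (κ + 1) x w = 0 :=
      Submodule.eq_zero_of_mem_pow h𝔤 le_rfl (dpow_mem_pow hx hw (κ + 1))
    simp only [S, expTrunc, mul_sum, ← sum_add_distrib, smul_pow, mul_smul_comm, ← smul_add,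
      ← dpow_succ]
    rw [sum_range_succ, hlast, smul_zero, smul_zero, add_zero]
  have hF (s : ℝ) : HasDerivAt (fun s => expTrunc κ (-(s • x)) * S s)
      (expTrunc κ (-(s • x)) * w * expTrunc κ (s • x)) s := by
    refine ((hasDerivAt_expTrunc_neg_smul hx' s).fun_mul (hS s)).congr_deriv ?_
    rw [neg_mul, (((Commute.refl x).smul_right s).neg_right).expTrunc_right.eq]
    noncomm_ring
  have hcont : Continuous fun s : ℝ => expTrunc κ (-(s • x)) * w * expTrunc κ (s • x) := by
    unfold expTrunc
    fun_prop
  rw [intervalIntegral.integral_eq_sub_of_hasDerivAt (fun s _ => hF s)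
    (hcont.intervalIntegrable 0 1)]
  simp [S, dexpTrunc, sum_range_succ' _ κ, dpow]

lemma integral_expTrunc_conj_eq_sum [CompleteSpace A] (h𝔤 : 𝔤 ^ (κ + 1) = ⊥) {x w : A}
    (hx : x ∈ 𝔤) (hw : w ∈ 𝔤) :
    ∫ s in (0 : ℝ)..1, expTrunc κ (-(s • x)) * w * expTrunc κ (s • x)
      = ∑ n ∈ range κ, ((-1 : ℝ) ^ n / ((n + 1).factorial : ℝ)) •
          (fun y => x * y - y * x)^[n] w := by
  have hlast : (fun y => y * x - x * y)^[κ] w = 0 :=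
    Submodule.eq_zero_of_mem_pow h𝔤 le_rfl (iterate_sub_mul_mem_pow hx hw κ)
  simp only [expTrunc_neg_smul_mul_mul_expTrunc_smul h𝔤 hx hw]
  rw [integral_sum_factorial_smul, sum_range_succ, hlast, smul_zero, add_zero]
  simp only [iterate_sub_mul_eq_neg_one_pow_smul, smul_smul, div_eq_inv_mul]

end Nilpotent

theorem stmt4_general {A : Type*} [NormedRing A] [NormedAlgebra ℝ A] [FiniteDimensional ℝ A]
    (κ : ℕ) (𝔤 : Submodule ℝ A)
    (hmul : ∀ x ∈ 𝔤, ∀ y ∈ 𝔤, x * y ∈ 𝔤)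
    (hnil : ∀ f : Fin (κ + 1) → A, (∀ i, f i ∈ 𝔤) → (List.ofFn f).prod = 0)
    (a b : ℝ) (g : ℝ → A)
    (hg : ContDiffOn ℝ 1 g (Set.Ioo a b))
    (hgG : ∀ t ∈ Set.Ioo a b, g t - 1 ∈ 𝔤) :
    ContDiffOn ℝ 1 (fun t => logTrunc κ (g t - 1)) (Set.Ioo a b) ∧
    ∀ t ∈ Set.Ioo a b,
      Ring.inverse (g t) * deriv g t ∈ 𝔤 ∧
      (∑ n ∈ Finset.range κ, (((-1 : ℝ) ^ n / ((n + 1).factorial : ℝ)) •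
          (fun y => (logTrunc κ (g t - 1)) * y - y * (logTrunc κ (g t - 1)))^[n]
            (deriv (fun u => logTrunc κ (g u - 1)) t))
        = Ring.inverse (g t) * deriv g t) ∧
      ((∫ s in (0:ℝ)..1,
          expTrunc κ (-(s • logTrunc κ (g t - 1)))
            * deriv (fun u => logTrunc κ (g u - 1)) t
            * expTrunc κ (s • logTrunc κ (g t - 1)))
        = Ring.inverse (g t) * deriv g t) := by
  have := FiniteDimensional.complete ℝ A
  have h𝔤 : 𝔤 ^ (κ + 1) = ⊥ := Submodule.pow_eq_bot_of_forall_prod_eq_zero hnil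
  set C := fun u => logTrunc κ (g u - 1)
  have hC : ContDiffOn ℝ 1 C (Set.Ioo a b) := (hg.sub contDiffOn_const).logTrunc
  refine ⟨hC, fun t ht => ?_⟩
  have hCmem (u : ℝ) (hu : u ∈ Set.Ioo a b) : C u ∈ 𝔤 :=
    logTrunc_mem (Submodule.mul_le.2 hmul) (hgG u hu)
  have hĊ : deriv C t ∈ 𝔤 :=
    deriv_mem_of_forall_mem isOpen_Ioo (Submodule.closed_of_finiteDimensional 𝔤) hCmem ht
  have hexp (u : ℝ) (hu : u ∈ Set.Ioo a b) : expTrunc κ (C u) = g u := by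
    rw [expTrunc_logTrunc (pow_succ_eq_zero_of_mem h𝔤 (hgG u hu)), add_sub_cancel]
  have hderiv : deriv g t = dexpTrunc κ (C t) (deriv C t) := by
    have hCt := ((hC.contDiffAt (Ioo_mem_nhds ht.1 ht.2)).differentiableAt one_ne_zero).hasDerivAt
    refine (hCt.expTrunc.congr_of_eventuallyEq ?_).deriv
    filter_upwards [Ioo_mem_nhds ht.1 ht.2] with u hu using (hexp u hu).symm
  have hinv : Ring.inverse (g t) = expTrunc κ (-C t) := by
    rw [← hexp t ht, Ring.inverse_expTrunc (pow_succ_eq_zero_of_mem h𝔤 (hCmem t ht))]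
  rw [hinv, hderiv, expTrunc_neg_mul_dexpTrunc h𝔤 (hCmem t ht) hĊ,
    integral_expTrunc_conj_eq_sum h𝔤 (hCmem t ht) hĊ]
  refine ⟨Submodule.sum_mem _ fun n _ => 𝔤.smul_mem _ ?_, rfl, rfl⟩
  exact Set.MapsTo.iterate (fun y hy => 𝔤.sub_mem (hmul _ (hCmem t ht) _ hy)
    (hmul _ hy _ (hCmem t ht))) n hĊ

/-- if `g : (a,b) → G` is `C¹`, `ξ̇(t) := g(t)⁻¹ ġ(t)` and
`C(t) := log(g(t)) ∈ 𝔤`, then `C` is `C¹` and for all `t ∈ (a,b)` one has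
`ξ̇(t) ∈ 𝔤`, `Σ_{n=0}^{κ−1} ((−1)^n/(n+1)!) ad_{C(t)}^n Ċ(t) = ξ̇(t)`, and
`∫₀¹ e^{−sC(t)} Ċ(t) e^{sC(t)} ds = ξ̇(t)`. -/
theorem stmt4 {A : Type*} [NormedRing A] [NormedAlgebra ℝ A] [FiniteDimensional ℝ A]
    (κ : ℕ) (𝔤 : Submodule ℝ A)
    (hmul : ∀ x ∈ 𝔤, ∀ y ∈ 𝔤, x * y ∈ 𝔤)
    (hcompl : IsCompl (Submodule.span ℝ ({1} : Set A)) 𝔤)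
    (hnil : ∀ f : Fin (κ + 1) → A, (∀ i, f i ∈ 𝔤) → (List.ofFn f).prod = 0)
    (a b : ℝ) (hab : a < b) (g : ℝ → A)
    (hg : ContDiffOn ℝ 1 g (Set.Ioo a b))
    (hgG : ∀ t ∈ Set.Ioo a b, g t - 1 ∈ 𝔤) :
    ContDiffOn ℝ 1 (fun t => logTrunc κ (g t - 1)) (Set.Ioo a b) ∧
    ∀ t ∈ Set.Ioo a b,
      Ring.inverse (g t) * deriv g t ∈ 𝔤 ∧
      (∑ n ∈ Finset.range κ, (((-1 : ℝ) ^ n / ((n + 1).factorial : ℝ)) •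
          (fun y => (logTrunc κ (g t - 1)) * y - y * (logTrunc κ (g t - 1)))^[n]
            (deriv (fun u => logTrunc κ (g u - 1)) t))
        = Ring.inverse (g t) * deriv g t) ∧
      ((∫ s in (0:ℝ)..1,
          expTrunc κ (-(s • logTrunc κ (g t - 1)))
            * deriv (fun u => logTrunc κ (g u - 1)) t
            * expTrunc κ (s • logTrunc κ (g t - 1)))
        = Ring.inverse (g t) * deriv g t) :=
  stmt4_general κ 𝔤 hmul hnil a b g hg hgG
end

section
/- (i) For tuples A(1),…,A(r) ∈ B^κ one has N(A(1) + ⋯ + A(r)) ≤ N(A(1)) + ⋯ + N(A(r)), where the sum of tuples is taken componentwise. (ii) For tuples A, B ∈ B^κ (setting A_j := 0 =: B_j for j > κ) and every integer k with 2 ≤ k ≤ 2κ: ‖Σ_{m,n ≥ 1, m+n=k} A_m B_n‖ ≤ N(A) N(B) (N(A) + N(B))^{k−2}. -/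
open scoped NNReal

/-- The homogeneous norm `N(A) := max_{1 ≤ k ≤ κ} ‖A_k‖^{1/k}` of a tuple
`A = (A₁,…,A_κ)` (indexed by `ℕ`, only indices `1,…,κ` are used). -/
noncomputable def homN {B : Type*} [NormedRing B] (κ : ℕ) (A : ℕ → B) : ℝ≥0 :=
  (Finset.Icc 1 κ).sup fun k => ‖A k‖₊ ^ ((k : ℝ)⁻¹)

/-! Everything rests on `‖A_k‖ ≤ N(A)^k`, valid for `1 ≤ k ≤ κ` and, once `A` vanishes beyond `κ`,
for all `k ≥ 1`. With `a^k + c^k ≤ (a + c)^k` it makes `N` subadditive, which is (i). For (ii),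
each term `A_m C_n` is at most `a^m c^n`; after factoring out `a c`, the sum over `m + n = k - 2`
is dominated by the binomial expansion of `(a + c)^(k-2)`. -/

open Finset

section HomogeneousNorm

variable {B : Type*} [NormedRing B] {κ : ℕ}

lemma homN_le_iff {A : ℕ → B} {t : ℝ≥0} :
    homN κ A ≤ t ↔ ∀ k ∈ Icc 1 κ, ‖A k‖₊ ≤ t ^ k := by
  refine Finset.sup_le_iff.trans (forall₂_congr fun k hk => ?_)
  have hk : (0 : ℝ) < k := Nat.cast_pos.mpr (mem_Icc.mp hk).1
  rw [NNReal.rpow_inv_le_iff hk, NNReal.rpow_natCast]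

lemma nnnorm_le_homN_pow {A : ℕ → B} {m : ℕ} (h1 : 1 ≤ m) (h2 : m ≤ κ) :
    ‖A m‖₊ ≤ homN κ A ^ m :=
  homN_le_iff.mp le_rfl m (mem_Icc.mpr ⟨h1, h2⟩)

lemma nnnorm_le_homN_pow_of_eq_zero {A : ℕ → B} (hA : ∀ j, κ < j → A j = 0) {m : ℕ}
    (hm : 1 ≤ m) : ‖A m‖₊ ≤ homN κ A ^ m := by
  rcases le_or_gt m κ with h | h
  · exact nnnorm_le_homN_pow hm h
  · simp [hA m h]

lemma homN_zero : homN κ (0 : ℕ → B) = 0 :=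
  le_antisymm (homN_le_iff.mpr fun k hk => by simp) zero_le

lemma homN_add_le (A C : ℕ → B) : homN κ (A + C) ≤ homN κ A + homN κ C :=
  homN_le_iff.mpr fun k hk => by
    obtain ⟨hk1, hkκ⟩ := mem_Icc.mp hk
    calc ‖A k + C k‖₊ ≤ ‖A k‖₊ + ‖C k‖₊ := nnnorm_add_le _ _
      _ ≤ homN κ A ^ k + homN κ C ^ k :=
        add_le_add (nnnorm_le_homN_pow hk1 hkκ) (nnnorm_le_homN_pow hk1 hkκ)
      _ ≤ (homN κ A + homN κ C) ^ k := pow_add_pow_le zero_le zero_le (by omega)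

lemma homN_sum_le {ι : Type*} (s : Finset ι) (A : ι → ℕ → B) :
    homN κ (∑ j ∈ s, A j) ≤ ∑ j ∈ s, homN κ (A j) :=
  le_sum_of_subadditive _ homN_zero.le homN_add_le s A

end HomogeneousNorm

lemma sum_antidiagonal_pow_mul_pow_le {R : Type*} [CommSemiring R] [PartialOrder R]
    [IsOrderedRing R] [CanonicallyOrderedAdd R] (a b : R) (n : ℕ) :
    ∑ p ∈ antidiagonal n, a ^ p.1 * b ^ p.2 ≤ (a + b) ^ n := by
  rw [(Commute.all a b).add_pow']
  exact sum_le_sum fun p hp => le_smul_of_one_le_left zero_le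
    (Nat.choose_pos (mem_antidiagonal.mp hp ▸ Nat.le_add_right _ _))

lemma sum_filter_antidiagonal_pos {M : Type*} [AddCommMonoid M] (n : ℕ) (f : ℕ × ℕ → M) :
    ∑ p ∈ (antidiagonal (n + 2)).filter (fun p => 1 ≤ p.1 ∧ 1 ≤ p.2), f p
      = ∑ q ∈ antidiagonal n, f (q.1 + 1, q.2 + 1) := by
  refine (sum_nbij' (fun q => (q.1 + 1, q.2 + 1)) (fun p => (p.1 - 1, p.2 - 1)) ?_ ?_ ?_ ?_ ?_).symm
    <;> intro p <;> simp +contextual <;> omega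

lemma nnnorm_sum_antidiagonal_mul_le {B : Type*} [NormedRing B] {A C : ℕ → B} {a c : ℝ≥0}
    (hA : ∀ m, 1 ≤ m → ‖A m‖₊ ≤ a ^ m) (hC : ∀ m, 1 ≤ m → ‖C m‖₊ ≤ c ^ m) (n : ℕ) :
    ‖∑ q ∈ antidiagonal n, A (q.1 + 1) * C (q.2 + 1)‖₊ ≤ a * c * (a + c) ^ n :=
  calc ‖∑ q ∈ antidiagonal n, A (q.1 + 1) * C (q.2 + 1)‖₊
      ≤ ∑ q ∈ antidiagonal n, ‖A (q.1 + 1)‖₊ * ‖C (q.2 + 1)‖₊ :=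
        (nnnorm_sum_le _ _).trans (sum_le_sum fun q _ => nnnorm_mul_le _ _)
    _ ≤ ∑ q ∈ antidiagonal n, a ^ (q.1 + 1) * c ^ (q.2 + 1) :=
        sum_le_sum fun q _ => mul_le_mul' (hA _ q.1.succ_pos) (hC _ q.2.succ_pos)
    _ = a * c * ∑ q ∈ antidiagonal n, a ^ q.1 * c ^ q.2 := by
        rw [mul_sum]; exact sum_congr rfl fun q _ => by ring
    _ ≤ a * c * (a + c) ^ n := by
        gcongr; exact sum_antidiagonal_pow_mul_pow_le a c n

theorem stmt8_general {B : Type*} [NormedRing B] (κ : ℕ) :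
    (∀ (r : ℕ) (A : Fin r → ℕ → B),
      homN κ (fun k => ∑ j, A j k) ≤ ∑ j, homN κ (A j)) ∧
    (∀ A C : ℕ → B, (∀ j, κ < j → A j = 0) → (∀ j, κ < j → C j = 0) →
      ∀ k : ℕ, 2 ≤ k → k ≤ 2 * κ →
        ‖∑ p ∈ (Finset.HasAntidiagonal.antidiagonal k).filter fun p => 1 ≤ p.1 ∧ 1 ≤ p.2,
            A p.1 * C p.2‖₊
          ≤ homN κ A * homN κ C * (homN κ A + homN κ C) ^ (k - 2)) := by
  refine ⟨fun r A => ?_, fun A C hA hC k hk _ => ?_⟩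
  · simpa only [Finset.sum_fn] using homN_sum_le univ A
  · obtain ⟨n, rfl⟩ := Nat.exists_eq_add_of_le' hk
    rw [sum_filter_antidiagonal_pos, Nat.add_sub_cancel]
    exact nnnorm_sum_antidiagonal_mul_le (fun _ => nnnorm_le_homN_pow_of_eq_zero hA)
      (fun _ => nnnorm_le_homN_pow_of_eq_zero hC) n

/-- (i) `N(A(1) + ⋯ + A(r)) ≤ N(A(1)) + ⋯ + N(A(r))` (componentwise sum);
(ii) for tuples `A, B` (with `A_j = 0 = B_j` for `j > κ`) and `2 ≤ k ≤ 2κ`: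
`‖Σ_{m,n ≥ 1, m+n=k} A_m B_n‖ ≤ N(A) N(B) (N(A) + N(B))^{k−2}`. -/
theorem stmt8 {B : Type*} [NormedRing B] [NormedAlgebra ℝ B] (κ : ℕ) :
    (∀ (r : ℕ) (A : Fin r → ℕ → B),
      homN κ (fun k => ∑ j, A j k) ≤ ∑ j, homN κ (A j)) ∧
    (∀ A C : ℕ → B, (∀ j, κ < j → A j = 0) → (∀ j, κ < j → C j = 0) →
      ∀ k : ℕ, 2 ≤ k → k ≤ 2 * κ →
        ‖∑ p ∈ (Finset.HasAntidiagonal.antidiagonal k).filter fun p => 1 ≤ p.1 ∧ 1 ≤ p.2,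
            A p.1 * C p.2‖₊
          ≤ homN κ A * homN κ C * (homN κ A + homN κ C) ^ (k - 2)) :=
  stmt8_general κ
end

section
/- Let δ > 0 and let X: (−δ,δ) × [0,T] × E → E, (ε,t,m) ↦ X^ε_t(m), be smooth; assume each time-dependent vector field X^ε is complete with flow μ^{X^ε} and that the map (ε,t,s,m) ↦ μ^{X^ε}_{t,s}(m) is smooth. Write X := X^0 and Y_t := (d/dε)|_{ε=0} X^ε_t, and let D_x denote the differential in the space variable. Then for all s, t ∈ [0,T] and m ∈ E: (d/dε)|_{ε=0} μ^{X^ε}_{t,s}(m) = ∫ₛᵗ (D_x μ^X_{t,τ})(μ^X_{τ,s}(m)) [ Y_τ(μ^X_{τ,s}(m)) ] dτ. -/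
/-
Put `F(τ, x) := μ⁰_{t,τ}(x)`. Since `μ⁰` is a flow, `F` is constant along the integral curves of
`X⁰`, which gives the transport equation `∂_τ F + D_x F · X⁰ = 0`. Differentiating
`τ ↦ F(τ, μ^ε_{τ,s}(m))` then yields the nonlinear variation of constants formula
`μ^ε_{t,s}(m) = μ⁰_{t,s}(m) + ∫ₛᵗ D_x F(τ, μ^ε_{τ,s}(m)) [X^ε_τ - X⁰_τ](μ^ε_{τ,s}(m)) dτ`,
whose integrand vanishes at `ε = 0`; differentiating under the integral sign at `ε = 0` gives
the claim.
-/

open Set Function Metric MeasureTheory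

section Lipschitz

variable {α β γ : Type*} [PseudoEMetricSpace α] [PseudoEMetricSpace β] [PseudoEMetricSpace γ]
  {f : α × β → γ} {K : NNReal} {s : Set α} {t : Set β}

theorem LipschitzOnWith.comp_prodMk_left (hf : LipschitzOnWith K f (s ×ˢ t)) {a : α} (ha : a ∈ s) :
    LipschitzOnWith K (fun b => f (a, b)) t := by
  simpa [comp_def] using hf.comp (LipschitzWith.prodMk_left a).lipschitzOnWith fun _ hb => ⟨ha, hb⟩

theorem LipschitzOnWith.comp_prodMk_right (hf : LipschitzOnWith K f (s ×ˢ t)) {b : β} (hb : b ∈ t) :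
    LipschitzOnWith K (fun a => f (a, b)) s := by
  simpa [comp_def] using hf.comp (LipschitzWith.prodMk_right b).lipschitzOnWith fun _ ha => ⟨ha, hb⟩

end Lipschitz

section

variable {E F : Type*} [NormedAddCommGroup E] [NormedSpace ℝ E] [NormedAddCommGroup F]
  [NormedSpace ℝ F]

theorem ContDiffOn.exists_lipschitzOnWith_uncurry_closedBall [FiniteDimensional ℝ E]
    {v : ℝ → E → E} {a b : ℝ} (hv : ContDiffOn ℝ 1 (uncurry v) (Icc a b ×ˢ univ)) (R : ℝ) :
    ∃ K, ∀ t ∈ Icc a b, LipschitzOnWith K (v t) (closedBall 0 R) := by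
  obtain ⟨K, hK⟩ := (hv.mono (prod_mono_right (subset_univ _))).exists_lipschitzOnWith
    one_ne_zero ((convex_Icc a b).prod (convex_closedBall 0 R))
    (isCompact_Icc.prod (isCompact_closedBall 0 R))
  exact ⟨K, fun t ht => hK.comp_prodMk_left ht⟩

theorem ODE_solution_unique_of_contDiffOn_Icc [FiniteDimensional ℝ E] {v : ℝ → E → E}
    {f g : ℝ → E} {a b t₀ : ℝ} (hv : ContDiffOn ℝ 1 (uncurry v) (Icc a b ×ˢ univ))
    (hf : ∀ t ∈ Icc a b, HasDerivWithinAt f (v t (f t)) (Icc a b) t)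
    (hg : ∀ t ∈ Icc a b, HasDerivWithinAt g (v t (g t)) (Icc a b) t)
    (ht₀ : t₀ ∈ Icc a b) (heq : f t₀ = g t₀) : EqOn f g (Icc a b) := by
  have hfc := HasDerivWithinAt.continuousOn hf
  have hgc := HasDerivWithinAt.continuousOn hg
  obtain ⟨R, hR⟩ := ((isCompact_Icc.image_of_continuousOn hfc).union
    (isCompact_Icc.image_of_continuousOn hgc)).isBounded.subset_closedBall 0
  obtain ⟨K, hK⟩ := hv.exists_lipschitzOnWith_uncurry_closedBall R
  have hfR : ∀ t ∈ Icc a b, f t ∈ closedBall 0 R := fun t ht => hR (.inl ⟨t, ht, rfl⟩)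
  have hgR : ∀ t ∈ Icc a b, g t ∈ closedBall 0 R := fun t ht => hR (.inr ⟨t, ht, rfl⟩)
  rw [← Icc_union_Icc_eq_Icc ht₀.1 ht₀.2]
  refine EqOn.union ?_ ?_
  · have hI : Ioc a t₀ ⊆ Ioc a b := Ioc_subset_Ioc_right ht₀.2
    have hI' : Ioc a t₀ ⊆ Icc a b := hI.trans Ioc_subset_Icc_self
    exact ODE_solution_unique_of_mem_Icc_left (fun t ht => hK t (hI' ht))
      (hfc.mono (Icc_subset_Icc_right ht₀.2))
      (fun t ht => (hf t (hI' ht)).mono_of_mem_nhdsWithin (Icc_mem_nhdsLE_of_mem (hI ht)))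
      (fun t ht => hfR t (hI' ht)) (hgc.mono (Icc_subset_Icc_right ht₀.2))
      (fun t ht => (hg t (hI' ht)).mono_of_mem_nhdsWithin (Icc_mem_nhdsLE_of_mem (hI ht)))
      (fun t ht => hgR t (hI' ht)) heq
  · have hI : Ico t₀ b ⊆ Ico a b := Ico_subset_Ico_left ht₀.1
    have hI' : Ico t₀ b ⊆ Icc a b := hI.trans Ico_subset_Icc_self
    exact ODE_solution_unique_of_mem_Icc_right (fun t ht => hK t (hI' ht))
      (hfc.mono (Icc_subset_Icc_left ht₀.1))
      (fun t ht => (hf t (hI' ht)).mono_of_mem_nhdsWithin (Icc_mem_nhdsGE_of_mem (hI ht)))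
      (fun t ht => hfR t (hI' ht)) (hgc.mono (Icc_subset_Icc_left ht₀.1))
      (fun t ht => (hg t (hI' ht)).mono_of_mem_nhdsWithin (Icc_mem_nhdsGE_of_mem (hI ht)))
      (fun t ht => hgR t (hI' ht)) heq

theorem HasFDerivWithinAt.hasFDerivAt_comp_prodMk {f : ℝ × E → F} {L : ℝ × E →L[ℝ] F}
    {I : Set ℝ} {τ : ℝ} {y : E} (hf : HasFDerivWithinAt f L (I ×ˢ univ) (τ, y)) (hτ : τ ∈ I) :
    HasFDerivAt (fun x => f (τ, x)) (L.comp (.inr ℝ ℝ E)) y :=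
  hasFDerivWithinAt_univ.mp <|
    hf.comp y (hasFDerivAt_prodMk_right τ y).hasFDerivWithinAt fun _ _ => ⟨hτ, trivial⟩

structure IsFlowOn (v : ℝ → E → E) (φ : ℝ → ℝ → E → E) (I : Set ℝ) : Prop where
  apply_self : ∀ s ∈ I, ∀ x, φ s s x = x
  hasDerivWithinAt : ∀ s ∈ I, ∀ x, ∀ t ∈ I,
    HasDerivWithinAt (fun τ => φ τ s x) (v t (φ t s x)) I t

namespace IsFlowOn

variable {v w : ℝ → E → E} {φ : ℝ → ℝ → E → E} {a b : ℝ}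

theorem apply_apply [FiniteDimensional ℝ E] (hφ : IsFlowOn v φ (Icc a b))
    (hv : ContDiffOn ℝ 1 (uncurry v) (Icc a b ×ˢ univ)) {r s t : ℝ} (hr : r ∈ Icc a b)
    (hs : s ∈ Icc a b) (ht : t ∈ Icc a b) (x : E) : φ t s (φ s r x) = φ t r x :=
  ODE_solution_unique_of_contDiffOn_Icc hv (hφ.hasDerivWithinAt s hs _)
    (hφ.hasDerivWithinAt r hr x) hs (hφ.apply_self s hs _) ht

/-- Transport equation: `F := (τ, x) ↦ φ t τ x` is constant along the integral curves of `v`,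
so `∂_τ F + D_x F · v = 0`. -/
theorem map_one_vectorField_eq_zero [FiniteDimensional ℝ E]
    (hφ : IsFlowOn v φ (Icc a b)) (hv : ContDiffOn ℝ 1 (uncurry v) (Icc a b ×ˢ univ))
    (hab : a < b) {t τ : ℝ} (ht : t ∈ Icc a b) (hτ : τ ∈ Icc a b) {y : E}
    {L : ℝ × E →L[ℝ] E} (hL : HasFDerivWithinAt (uncurry (φ t)) L (Icc a b ×ˢ univ) (τ, y)) :
    L (1, v τ y) = 0 := by
  have hcurve : HasDerivWithinAt (fun σ => (σ, φ σ τ y)) (1, v τ y) (Icc a b) τ := by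
    simpa [hφ.apply_self τ hτ] using
      (hasDerivWithinAt_id τ _).prodMk (hφ.hasDerivWithinAt τ hτ y τ hτ)
  have hcomp := hL.comp_hasDerivWithinAt_of_eq τ hcurve (fun σ _ => ⟨‹_›, trivial⟩)
    (by simp [hφ.apply_self τ hτ])
  have hconst : HasDerivWithinAt (fun _ => φ t τ y) (L (1, v τ y)) (Icc a b) τ :=
    hcomp.congr_of_mem (fun σ hσ => (hφ.apply_apply hv hτ hσ ht y).symm) hτ
  exact ((uniqueDiffOn_Icc hab) τ hτ).eq_deriv _ hconst (hasDerivWithinAt_const τ _ _)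

theorem hasDerivWithinAt_apply_of_hasDerivWithinAt [FiniteDimensional ℝ E]
    (hφ : IsFlowOn v φ (Icc a b)) (hv : ContDiffOn ℝ 1 (uncurry v) (Icc a b ×ˢ univ))
    (hab : a < b) {t : ℝ} (ht : t ∈ Icc a b)
    (hF : DifferentiableOn ℝ (uncurry (φ t)) (Icc a b ×ˢ univ)) {c : ℝ → E} {c' : E} {τ : ℝ}
    (hτ : τ ∈ Icc a b) (hc : HasDerivWithinAt c c' (Icc a b) τ) :
    HasDerivWithinAt (fun σ => φ t σ (c σ)) (fderiv ℝ (φ t τ) (c τ) (c' - v τ (c τ)))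
      (Icc a b) τ := by
  have hL := (hF (τ, c τ) ⟨hτ, trivial⟩).hasFDerivWithinAt
  have hslice : fderiv ℝ (φ t τ) (c τ) = _ := (hL.hasFDerivAt_comp_prodMk hτ).fderiv
  have hsplit : ((1 : ℝ), c') = (1, v τ (c τ)) + (0, c' - v τ (c τ)) := by simp
  have hcomp := hL.comp_hasDerivWithinAt τ ((hasDerivWithinAt_id τ _).prodMk hc)
    (fun σ hσ => by exact ⟨hσ, trivial⟩)
  rw [hsplit, map_add, hφ.map_one_vectorField_eq_zero hv hab ht hτ hL,
    zero_add] at hcomp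
  simp only [hslice, ContinuousLinearMap.comp_apply, ContinuousLinearMap.inr_apply]
  exact hcomp

/-- The nonlinear variation of constants (Alekseev–Gröbner) formula. -/
theorem eq_apply_add_integral [FiniteDimensional ℝ E]
    (hφ : IsFlowOn v φ (Icc a b)) (hv : ContDiffOn ℝ 1 (uncurry v) (Icc a b ×ˢ univ))
    (hab : a < b) {s t : ℝ} (hs : s ∈ Icc a b) (ht : t ∈ Icc a b)
    (hF : ContDiffOn ℝ 1 (uncurry (φ t)) (Icc a b ×ˢ univ))
    (hw : ContinuousOn (uncurry w) (Icc a b ×ˢ univ)) {c : ℝ → E}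
    (hc : ∀ τ ∈ Icc a b, HasDerivWithinAt c (w τ (c τ)) (Icc a b) τ) :
    c t = φ t s (c s) + ∫ τ in s..t, fderiv ℝ (φ t τ) (c τ) (w τ (c τ) - v τ (c τ)) := by
  have hderiv := fun τ hτ => hφ.hasDerivWithinAt_apply_of_hasDerivWithinAt hv hab ht
    (hF.differentiableOn one_ne_zero) hτ (hc τ hτ)
  have hcc := HasDerivWithinAt.continuousOn hc
  have hint : ContinuousOn (fun τ => fderiv ℝ (φ t τ) (c τ) (w τ (c τ) - v τ (c τ)))
      (Icc a b) := by
    have hk : ContinuousOn (fun τ => w τ (c τ) - v τ (c τ)) (Icc a b) :=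
      (hw.comp (continuousOn_id.prodMk hcc) fun τ hτ => ⟨hτ, trivial⟩).sub
        (hv.continuousOn.comp (continuousOn_id.prodMk hcc) fun τ hτ => ⟨hτ, trivial⟩)
    intro τ hτ
    have := (hF (τ, c τ) ⟨hτ, trivial⟩).fderivWithin_apply (m := 0)
      (contDiffOn_zero.mpr hcc τ hτ) (contDiffOn_zero.mpr hk τ hτ) uniqueDiffOn_univ
      (by norm_num) hτ (fun _ _ => trivial)
    simpa only [fderivWithin_univ] using this.continuousWithinAt
  have hsub : uIcc s t ⊆ Icc a b := uIcc_subset_Icc hs ht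
  have hFTC := intervalIntegral.integral_eq_sub_of_hasDeriv_right
    ((HasDerivWithinAt.continuousOn hderiv).mono hsub)
    (fun τ hτ => by
      have hτ' : τ ∈ Ioo a b := ⟨(le_min hs.1 ht.1).trans_lt hτ.1, hτ.2.trans_le (max_le hs.2 ht.2)⟩
      exact ((hderiv τ (Ioo_subset_Icc_self hτ')).hasDerivAt
        (Icc_mem_nhds hτ'.1 hτ'.2)).hasDerivWithinAt)
    ((hint.mono hsub).intervalIntegrable)
  rw [hFTC, hφ.apply_self t ht]
  abel

end IsFlowOn

theorem hasDerivAt_integral_of_contDiffOn {H : ℝ → ℝ → F} {H' : ℝ → F} {ε₀ r a b s t : ℝ}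
    (hr : 0 < r) (hab : a < b)
    (hH : ContDiffOn ℝ 1 (uncurry H) (Icc (ε₀ - r) (ε₀ + r) ×ˢ Icc a b))
    (hH' : ∀ τ ∈ Icc a b, HasDerivAt (H · τ) (H' τ) ε₀) (hs : s ∈ Icc a b) (ht : t ∈ Icc a b) :
    HasDerivAt (fun ε => ∫ τ in s..t, H ε τ) (∫ τ in s..t, H' τ) ε₀ := by
  set R := Icc (ε₀ - r) (ε₀ + r) ×ˢ Icc a b
  have hball : ball ε₀ r ⊆ Icc (ε₀ - r) (ε₀ + r) := by
    rw [← Real.closedBall_eq_Icc]; exact ball_subset_closedBall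
  have hε₀ : ε₀ ∈ Icc (ε₀ - r) (ε₀ + r) := hball (mem_ball_self hr)
  have hsub : uIoc s t ⊆ Icc a b := uIoc_subset_uIcc.trans (uIcc_subset_Icc hs ht)
  obtain ⟨K, hK⟩ := hH.exists_lipschitzOnWith one_ne_zero
    ((convex_Icc _ _).prod (convex_Icc a b)) (isCompact_Icc.prod isCompact_Icc)
  have hHcont : ∀ ε ∈ Icc (ε₀ - r) (ε₀ + r), ContinuousOn (H ε) (Icc a b) := fun ε hε =>
    hH.continuousOn.comp (continuousOn_const.prodMk continuousOn_id) fun τ hτ => ⟨hε, hτ⟩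
  have hH'eq : ∀ τ ∈ Icc a b, H' τ = fderivWithin ℝ (uncurry H) R (ε₀, τ) (1, 0) := by
    intro τ hτ
    have hD := ((hH.differentiableOn one_ne_zero) (ε₀, τ) ⟨hε₀, hτ⟩).hasFDerivWithinAt
    have hslice := hD.comp_hasDerivWithinAt ε₀
      ((hasDerivWithinAt_id ε₀ (Icc (ε₀ - r) (ε₀ + r))).prodMk (hasDerivWithinAt_const ε₀ _ τ))
      (fun ε hε => by exact ⟨hε, hτ⟩)
    exact ((uniqueDiffOn_Icc (by linarith)) ε₀ hε₀).eq_deriv _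
      (hH' τ hτ).hasDerivWithinAt hslice
  have hH'cont : ContinuousOn H' (Icc a b) := by
    refine ContinuousOn.congr ?_ hH'eq
    exact ((hH.continuousOn_fderivWithin
      ((uniqueDiffOn_Icc (by linarith)).prod (uniqueDiffOn_Icc hab)) le_rfl).comp
      (continuousOn_const.prodMk continuousOn_id) fun τ hτ => ⟨hε₀, hτ⟩).clm_apply
      continuousOn_const
  refine (intervalIntegral.hasDerivAt_integral_of_dominated_loc_of_lip (bound := fun _ => K)
    (ball_mem_nhds ε₀ hr) ?_ ?_ ?_ ?_ intervalIntegrable_const ?_).2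
  · filter_upwards [ball_mem_nhds ε₀ hr] with ε hε
    exact ((hHcont ε (hball hε)).mono hsub).aestronglyMeasurable measurableSet_uIoc
  · exact ((hHcont ε₀ hε₀).mono (uIcc_subset_Icc hs ht)).intervalIntegrable
  · exact (hH'cont.mono hsub).aestronglyMeasurable measurableSet_uIoc
  · refine ae_of_all _ fun τ hτ => ?_
    simpa using (hK.comp_prodMk_right (hsub hτ)).mono hball
  · exact ae_of_all _ fun τ hτ => hH' τ (hsub hτ)

section VariationIntegrand

variable {Φ : ℝ → E → F} {X : ℝ → ℝ → E → E} {y : ℝ → ℝ → E} {U J : Set ℝ} {ε₀ : ℝ}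

theorem contDiffOn_fderiv_apply_sub (hΦ : ContDiffOn ℝ 2 (uncurry Φ) (J ×ˢ univ))
    (hX : ContDiffOn ℝ 1 (fun p : ℝ × ℝ × E => X p.1 p.2.1 p.2.2) (U ×ˢ J ×ˢ univ))
    (hy : ContDiffOn ℝ 1 (uncurry y) (U ×ˢ J)) (hε₀ : ε₀ ∈ U) :
    ContDiffOn ℝ 1
      (uncurry fun ε τ => fderiv ℝ (Φ τ) (y ε τ) (X ε τ (y ε τ) - X ε₀ τ (y ε τ))) (U ×ˢ J) := by
  have hΦ' : ContDiffOn ℝ 2 (fun q : (ℝ × ℝ) × E => Φ q.1.2 q.2) ((U ×ˢ J) ×ˢ univ) :=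
    hΦ.comp (by fun_prop : ContDiff ℝ 2 fun q : (ℝ × ℝ) × E => (q.1.2, q.2)).contDiffOn
      fun q hq => ⟨hq.1.2, trivial⟩
  have hk : ContDiffOn ℝ 1 (fun p : ℝ × ℝ => X p.1 p.2 (y p.1 p.2) - X ε₀ p.2 (y p.1 p.2))
      (U ×ˢ J) :=
    (hX.comp (contDiffOn_fst.prodMk (contDiffOn_snd.prodMk hy)) fun p hp =>
      ⟨hp.1, hp.2, trivial⟩).sub
    (hX.comp (contDiffOn_const.prodMk (contDiffOn_snd.prodMk hy)) fun p hp =>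
      ⟨hε₀, hp.2, trivial⟩)
  intro p hp
  have := (hΦ' _ ⟨hp, trivial⟩).fderivWithin_apply (f := fun q : ℝ × ℝ => Φ q.2)
    (hy p hp) (hk p hp) uniqueDiffOn_univ one_add_one_eq_two.le hp fun _ _ => trivial
  simp only [fderivWithin_univ] at this
  exact this

theorem hasDerivAt_fderiv_apply_sub (hΦ : ContDiffOn ℝ 2 (uncurry Φ) (J ×ˢ univ))
    (hX : ContDiffOn ℝ 1 (fun p : ℝ × ℝ × E => X p.1 p.2.1 p.2.2) (U ×ˢ J ×ˢ univ))
    (hy : ContDiffOn ℝ 1 (uncurry y) (U ×ˢ J)) (hU : U ∈ nhds ε₀) {τ : ℝ} (hτ : τ ∈ J) :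
    HasDerivAt (fun ε => fderiv ℝ (Φ τ) (y ε τ) (X ε τ (y ε τ) - X ε₀ τ (y ε τ)))
      (fderiv ℝ (Φ τ) (y ε₀ τ) (deriv (fun ε => X ε τ (y ε₀ τ)) ε₀)) ε₀ := by
  have hΦτ : ContDiff ℝ 2 (Φ τ) := contDiffOn_univ.mp <|
    hΦ.comp (by fun_prop : ContDiff ℝ 2 fun x : E => (τ, x)).contDiffOn fun _ _ => ⟨hτ, trivial⟩
  have hXτ : ContDiffOn ℝ 1 (fun p : ℝ × E => X p.1 τ p.2) (U ×ˢ univ) :=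
    hX.comp (by fun_prop : ContDiff ℝ 1 fun p : ℝ × E => (p.1, τ, p.2)).contDiffOn
      fun p hp => ⟨hp.1, hτ, trivial⟩
  have hyτ : ContDiffOn ℝ 1 (fun ε => y ε τ) U :=
    hy.comp (contDiff_id.prodMk contDiff_const).contDiffOn fun ε hε => ⟨hε, hτ⟩
  have hL := ((hXτ.contDiffAt (prod_mem_nhds (y := y ε₀ τ) hU Filter.univ_mem)).differentiableAt
    one_ne_zero).hasFDerivAt
  have hyd := ((hyτ.contDiffAt hU).differentiableAt one_ne_zero).hasDerivAt
  set L := fderiv ℝ (fun p : ℝ × E => X p.1 τ p.2) (ε₀, y ε₀ τ)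
  have hB : HasDerivAt (fun ε => X ε τ (y ε τ) - X ε₀ τ (y ε τ))
      (L (1, deriv (y · τ) ε₀) - L (0, deriv (y · τ) ε₀)) ε₀ :=
    (hL.comp_hasDerivAt ε₀ ((hasDerivAt_id ε₀).prodMk hyd)).sub
      (hL.comp_hasDerivAt ε₀ ((hasDerivAt_const ε₀ ε₀).prodMk hyd))
  have hhor : HasDerivAt (fun ε => X ε τ (y ε₀ τ)) (L (1, 0)) ε₀ := by
    exact hL.comp_hasDerivAt ε₀ ((hasDerivAt_id ε₀).prodMk (hasDerivAt_const ε₀ (y ε₀ τ)))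
  have hA : DifferentiableAt ℝ (fun ε => fderiv ℝ (Φ τ) (y ε τ)) ε₀ :=
    ((hΦτ.fderiv_right one_add_one_eq_two.le).differentiable one_ne_zero _).comp ε₀
      hyd.differentiableAt
  have h := hA.hasDerivAt.clm_apply hB
  rw [← map_sub] at h
  rw [hhor.deriv]
  simpa using h

end VariationIntegrand

end

/-- differentiating a flow with respect to a parameter:
`(d/dε)|₀ μ^{X^ε}_{t,s}(m) = ∫ₛᵗ (D_x μ^X_{t,τ})(μ^X_{τ,s}(m)) [Y_τ(μ^X_{τ,s}(m))] dτ`,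
where `X := X^0` and `Y_t := (d/dε)|₀ X^ε_t`. -/
theorem stmt13 {E : Type*} [NormedAddCommGroup E] [NormedSpace ℝ E] [FiniteDimensional ℝ E]
    (T : ℝ) (hT : 0 < T) (δ : ℝ) (hδ : 0 < δ)
    (X : ℝ → ℝ → E → E)
    (hX : ContDiffOn ℝ (⊤ : ℕ∞) (fun p : ℝ × ℝ × E => X p.1 p.2.1 p.2.2)
      (Set.Ioo (-δ) δ ×ˢ Set.Icc 0 T ×ˢ Set.univ))
    (μ : ℝ → ℝ → ℝ → E → E)
    (hμinit : ∀ ε ∈ Set.Ioo (-δ) δ, ∀ s ∈ Set.Icc (0:ℝ) T, ∀ m : E, μ ε s s m = m)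
    (hμode : ∀ ε ∈ Set.Ioo (-δ) δ, ∀ s ∈ Set.Icc (0:ℝ) T, ∀ m : E, ∀ t ∈ Set.Icc (0:ℝ) T,
      HasDerivWithinAt (fun τ => μ ε τ s m) (X ε t (μ ε t s m)) (Set.Icc 0 T) t)
    (hμsmooth : ContDiffOn ℝ (⊤ : ℕ∞)
      (fun p : ℝ × ℝ × ℝ × E => μ p.1 p.2.1 p.2.2.1 p.2.2.2)
      (Set.Ioo (-δ) δ ×ˢ Set.Icc 0 T ×ˢ Set.Icc 0 T ×ˢ Set.univ)) :
    ∀ s ∈ Set.Icc (0:ℝ) T, ∀ t ∈ Set.Icc (0:ℝ) T, ∀ m : E,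
      HasDerivAt (fun ε => μ ε t s m)
        (∫ τ in s..t,
          (fderiv ℝ (fun x => μ 0 t τ x) (μ 0 τ s m))
            (deriv (fun ε => X ε τ (μ 0 τ s m)) 0)) 0 := by
  intro s hs t ht m
  replace hX := hX.of_le (WithTop.coe_le_coe.mpr le_top : (1 : WithTop ℕ∞) ≤ (⊤ : ℕ∞))
  replace hμsmooth := hμsmooth.of_le (WithTop.coe_le_coe.mpr le_top : (2 : WithTop ℕ∞) ≤ (⊤ : ℕ∞))
  have h0 : (0 : ℝ) ∈ Ioo (-δ) δ := ⟨by linarith, hδ⟩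
  have hXε : ∀ ε ∈ Ioo (-δ) δ, ContDiffOn ℝ 1 (uncurry (X ε)) (Icc 0 T ×ˢ univ) := fun ε hε =>
    hX.comp (by fun_prop : ContDiff ℝ 1 fun p : ℝ × E => (ε, p)).contDiffOn fun p hp => ⟨hε, hp⟩
  have hF : ContDiffOn ℝ 2 (uncurry (μ 0 t)) (Icc 0 T ×ˢ univ) :=
    hμsmooth.comp (by fun_prop : ContDiff ℝ 2 fun p : ℝ × E => ((0 : ℝ), t, p)).contDiffOn
      fun p hp => ⟨h0, ht, hp⟩
  have hy : ContDiffOn ℝ 1 (uncurry fun ε τ => μ ε τ s m) (Ioo (-δ) δ ×ˢ Icc 0 T) :=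
    (hμsmooth.comp (by fun_prop : ContDiff ℝ 2 fun p : ℝ × ℝ => (p.1, p.2, s, m)).contDiffOn
      fun p hp => ⟨hp.1, hp.2, hs, trivial⟩).of_le (by norm_num)
  have hrep : ∀ ε ∈ Ioo (-δ) δ, μ ε t s m = μ 0 t s m + ∫ τ in s..t,
      fderiv ℝ (μ 0 t τ) (μ ε τ s m) (X ε τ (μ ε τ s m) - X 0 τ (μ ε τ s m)) := by
    intro ε hε
    have := IsFlowOn.eq_apply_add_integral ⟨hμinit 0 h0, hμode 0 h0⟩ (hXε 0 h0) hT hs ht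
      (hF.of_le (by norm_num)) (hXε ε hε).continuousOn (hμode ε hε s hs m)
    rwa [hμinit ε hε s hs m] at this
  have hnhds : Ioo (-δ) δ ∈ nhds (0 : ℝ) := Ioo_mem_nhds h0.1 h0.2
  have hrect : Icc (0 - δ / 2) (0 + δ / 2) ×ˢ Icc 0 T ⊆ Ioo (-δ) δ ×ˢ Icc 0 T :=
    prod_mono (Icc_subset_Ioo (by linarith) (by linarith)) subset_rfl
  exact ((hasDerivAt_integral_of_contDiffOn (half_pos hδ) hT
    ((contDiffOn_fderiv_apply_sub hF hX hy h0).mono hrect)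
    (fun τ hτ => hasDerivAt_fderiv_apply_sub hF hX hy hnhds hτ) hs ht).const_add
    _).congr_of_eventuallyEq (Filter.eventually_of_mem hnhds hrep)
end

section
/- For every smooth vector field Y: E → E, every t ∈ ℝ, and every m ∈ E: ∂_t (Ad_{ν_t} Y)(m) = [Ad_{ν_t} Y, W_t](m), where W_t := ν̇_t ∘ ν_t⁻¹ with ν̇_t(m) := ∂_t ν_t(m). -/
/-!
Write `m = ν_t x` and follow the orbit `u ↦ ν_u x`, whose velocity at `t` is `W_t m`. Along it
`(Ad_{ν_u} Y)(ν_u x) = Dν_u(x) (Y x)`, so the chain rule gives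
`∂_t (Ad_{ν_t} Y)(m) + D(Ad_{ν_t} Y)(m) (W_t m) = ∂_u [Dν_u(x) (Y x)]`. By symmetry of the second
derivative of `(u, z) ↦ ν_u z` the right side is `Dν̇_t(x) (Y x)`, and since `W_t = ν̇_t ∘ ν_t⁻¹`
this is `DW_t(m) (Dν_t(x) (Y x)) = DW_t(m) ((Ad_{ν_t} Y)(m))`.
-/

/-- The adjoint action `(Ad_{ν_t} Y)(m) := (Dν_t)(ν_t⁻¹(m)) [Y(ν_t⁻¹(m))]`. -/
noncomputable def AdFlow {E : Type*} [NormedAddCommGroup E] [NormedSpace ℝ E]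
    (ν νinv : ℝ → E → E) (Y : E → E) (t : ℝ) (m : E) : E :=
  (fderiv ℝ (ν t) (νinv t m)) (Y (νinv t m))

/-- The vector field `W_t := ν̇_t ∘ ν_t⁻¹`. -/
noncomputable def flowW {E : Type*} [NormedAddCommGroup E] [NormedSpace ℝ E]
    (ν νinv : ℝ → E → E) (t : ℝ) (m : E) : E :=
  deriv (fun u => ν u (νinv t m)) t

open Function

section Partial

variable {E F G : Type*} [NormedAddCommGroup E] [NormedSpace ℝ E]
  [NormedAddCommGroup F] [NormedSpace ℝ F] [NormedAddCommGroup G] [NormedSpace ℝ G]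

theorem Differentiable.partial_snd {g : ℝ × E → F} (hg : Differentiable ℝ g) (s : ℝ) :
    Differentiable ℝ (fun y => g (s, y)) :=
  hg.comp ((differentiable_const s).prodMk differentiable_id)

theorem fderiv_partial_snd_apply {g : ℝ × E → F} {s : ℝ} {y : E}
    (hg : DifferentiableAt ℝ g (s, y)) (v : E) :
    fderiv ℝ (fun z => g (s, z)) y v = fderiv ℝ g (s, y) (0, v) := by
  have h : HasFDerivAt (fun z => g (s, z)) ((fderiv ℝ g (s, y)).comp (.inr ℝ ℝ E)) y :=
    hg.hasFDerivAt.comp y (hasFDerivAt_prodMk_right s y)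
  simp [h.fderiv]

theorem hasDerivAt_partial_fst {g : ℝ × E → F} {s : ℝ} {y : E}
    (hg : DifferentiableAt ℝ g (s, y)) :
    HasDerivAt (fun u => g (u, y)) (fderiv ℝ g (s, y) (1, 0)) s :=
  hg.hasFDerivAt.comp_hasDerivAt s ((hasDerivAt_id s).prodMk (hasDerivAt_const s y))

theorem ContDiff.deriv_partial_fst {n : WithTop ℕ∞} {g : ℝ × E → F} (hg : ContDiff ℝ (n + 1) g)
    (s : ℝ) : ContDiff ℝ n (fun y => deriv (fun u => g (u, y)) s) := by
  have hg' : ContDiff ℝ n (fderiv ℝ g) := hg.fderiv_right le_rfl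
  have hd : Differentiable ℝ g := hg.differentiable (by simp)
  simp_rw [fun y => (hasDerivAt_partial_fst (hd (s, y))).deriv]
  exact (hg'.comp (contDiff_const.prodMk contDiff_id)).clm_apply contDiff_const

theorem hasDerivAt_partial_fst_of_hasDerivAt_comp {g : ℝ × E → F} {γ : ℝ → E} {γ' : E} {L : F}
    {t : ℝ} (hg : DifferentiableAt ℝ g (t, γ t)) (hγ : HasDerivAt γ γ' t)
    (hL : HasDerivAt (fun u => g (u, γ u)) L t) :
    HasDerivAt (fun u => g (u, γ t)) (L - fderiv ℝ (fun z => g (t, z)) (γ t) γ') t := by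
  have hchain := hg.hasFDerivAt.comp_hasDerivAt t ((hasDerivAt_id t).prodMk hγ)
  have hsplit : ((1 : ℝ), γ') = (1, 0) + (0, γ') := by simp
  rw [hL.unique hchain, fderiv_partial_snd_apply hg, hsplit, map_add, add_sub_cancel_right]
  exact hasDerivAt_partial_fst hg

theorem hasDerivAt_fderiv_partial_snd_apply {g : ℝ × E → F} (hg : ContDiff ℝ 2 g)
    (t : ℝ) (x v : E) :
    HasDerivAt (fun u => fderiv ℝ (fun y => g (u, y)) x v)
      (fderiv ℝ (fun y => deriv (fun u => g (u, y)) t) x v) t := by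
  -- Both sides are `D²g(t, x)` applied to `(1, 0)` and `(0, v)`, in opposite orders.
  have hd : Differentiable ℝ g := hg.differentiable (by simp)
  have hd' : Differentiable ℝ (fderiv ℝ g) :=
    (hg.fderiv_right (m := 1) (by norm_num)).differentiable one_ne_zero
  simp_rw [fun u => fderiv_partial_snd_apply (hd (u, x)) v,
    fun y => (hasDerivAt_partial_fst (hd (t, y))).deriv]
  have h1 : HasDerivAt (fun u => fderiv ℝ g (u, x) (0, v))
      (fderiv ℝ (fderiv ℝ g) (t, x) (1, 0) (0, v)) t := by
    simpa using (hasDerivAt_partial_fst (hd' (t, x))).clm_apply (hasDerivAt_const t ((0 : ℝ), v))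
  have h2 : fderiv ℝ (fun y => fderiv ℝ g (t, y) (1, 0)) x v
      = fderiv ℝ (fderiv ℝ g) (t, x) (0, v) (1, 0) := by
    rw [fderiv_partial_snd_apply ((hd' (t, x)).clm_apply (differentiableAt_const _)),
      fderiv_clm_apply (hd' _) (differentiableAt_const _)]
    simp
  rwa [h2, ← (hg.contDiffAt (x := (t, x))).isSymmSndFDerivAt (by simp)]

theorem fderiv_comp_leftInverse_apply {φ : E → F} {ψ : F → E} {V : E → G} (h : LeftInverse ψ φ)
    {x : E} (hV : DifferentiableAt ℝ V x) (hψ : DifferentiableAt ℝ ψ (φ x))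
    (hφ : DifferentiableAt ℝ φ x) (w : E) :
    fderiv ℝ (V ∘ ψ) (φ x) (fderiv ℝ φ x w) = fderiv ℝ V x w := by
  rw [← h x] at hV
  calc fderiv ℝ (V ∘ ψ) (φ x) (fderiv ℝ φ x w)
      = fderiv ℝ V (ψ (φ x)) (fderiv ℝ (ψ ∘ φ) x w) := by
        rw [fderiv_comp _ hV hψ, fderiv_comp _ hψ hφ]; rfl
    _ = fderiv ℝ V x w := by rw [h.comp_eq_id, fderiv_id, h x]; rfl

end Partial

theorem contDiff_adFlow {E : Type*} [NormedAddCommGroup E] [NormedSpace ℝ E]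
    {ν νinv : ℝ → E → E} {n : WithTop ℕ∞} (hν : ContDiff ℝ (n + 1) (fun p : ℝ × E => ν p.1 p.2))
    (hνinv : ContDiff ℝ n (fun p : ℝ × E => νinv p.1 p.2)) {Y : E → E} (hY : ContDiff ℝ n Y) :
    ContDiff ℝ n (fun p : ℝ × E => AdFlow ν νinv Y p.1 p.2) := by
  have hd : Differentiable ℝ (fun p : ℝ × E => ν p.1 p.2) := hν.differentiable (by simp)
  simp_rw [AdFlow, fun (s : ℝ) (y : E) => fderiv_partial_snd_apply (hd (s, νinv s y)) (Y (νinv s y))]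
  exact ((hν.fderiv_right le_rfl).comp (contDiff_fst.prodMk hνinv)).clm_apply
    (contDiff_const.prodMk (hY.comp hνinv))

theorem stmt15_general {E : Type*} [NormedAddCommGroup E] [NormedSpace ℝ E]
    (ν νinv : ℝ → E → E)
    (hν : ContDiff ℝ (⊤ : ℕ∞) (fun p : ℝ × E => ν p.1 p.2))
    (hνinv : ContDiff ℝ (⊤ : ℕ∞) (fun p : ℝ × E => νinv p.1 p.2))
    (hinv1 : ∀ (t : ℝ) (m : E), ν t (νinv t m) = m)
    (hinv2 : ∀ (t : ℝ) (m : E), νinv t (ν t m) = m)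
    (Y : E → E) (hY : ContDiff ℝ (⊤ : ℕ∞) Y) :
    ∀ (t : ℝ) (m : E),
      HasDerivAt (fun u => AdFlow ν νinv Y u m)
        ((fderiv ℝ (flowW ν νinv t) m) (AdFlow ν νinv Y t m)
          - (fderiv ℝ (AdFlow ν νinv Y t) m) (flowW ν νinv t m)) t := by
  intro t m
  have hν2 : ContDiff ℝ 2 (fun p : ℝ × E => ν p.1 p.2) := hν.of_le (WithTop.coe_le_coe.mpr le_top)
  have hνd : Differentiable ℝ (fun p : ℝ × E => ν p.1 p.2) := hν.differentiable (by simp)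
  have hνt : Differentiable ℝ (ν t) := hνd.partial_snd t
  have hνinvt : Differentiable ℝ (νinv t) := (hνinv.differentiable (by simp)).partial_snd t
  have hAd : Differentiable ℝ (fun p : ℝ × E => AdFlow ν νinv Y p.1 p.2) :=
    (contDiff_adFlow (n := 1) hν2 (hνinv.of_le (WithTop.coe_le_coe.mpr le_top))
      (hY.of_le (WithTop.coe_le_coe.mpr le_top))).differentiable one_ne_zero
  obtain ⟨x, rfl⟩ : ∃ x, ν t x = m := ⟨νinv t m, hinv1 t m⟩
  have hγ : HasDerivAt (fun u => ν u x) (flowW ν νinv t (ν t x)) t := by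
    rw [flowW, hinv2]
    exact (hasDerivAt_partial_fst (hνd (t, x))).differentiableAt.hasDerivAt
  have hAlong : HasDerivAt (fun u => AdFlow ν νinv Y u (ν u x))
      (fderiv ℝ (flowW ν νinv t) (ν t x) (AdFlow ν νinv Y t (ν t x))) t := by
    have hW : flowW ν νinv t = (fun z => deriv (fun u => ν u z) t) ∘ νinv t := rfl
    have hV : DifferentiableAt ℝ (fun z => deriv (fun u => ν u z) t) x :=
      (ContDiff.deriv_partial_fst (n := 1) hν2 t).differentiable one_ne_zero x
    simp only [AdFlow, hinv2]
    rw [hW, fderiv_comp_leftInverse_apply (hinv2 t) hV (hνinvt _) (hνt x)]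
    exact hasDerivAt_fderiv_partial_snd_apply hν2 t x (Y x)
  exact hasDerivAt_partial_fst_of_hasDerivAt_comp (hAd _) hγ hAlong

/-- `∂_t (Ad_{ν_t} Y)(m) = [Ad_{ν_t} Y, W_t](m)` where
`[U,V](m) := DV(m) U(m) − DU(m) V(m)` and `W_t := ν̇_t ∘ ν_t⁻¹`. -/
theorem stmt15 {E : Type*} [NormedAddCommGroup E] [NormedSpace ℝ E] [FiniteDimensional ℝ E]
    (ν νinv : ℝ → E → E)
    (hν : ContDiff ℝ (⊤ : ℕ∞) (fun p : ℝ × E => ν p.1 p.2))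
    (hνinv : ContDiff ℝ (⊤ : ℕ∞) (fun p : ℝ × E => νinv p.1 p.2))
    (hinv1 : ∀ (t : ℝ) (m : E), ν t (νinv t m) = m)
    (hinv2 : ∀ (t : ℝ) (m : E), νinv t (ν t m) = m)
    (Y : E → E) (hY : ContDiff ℝ (⊤ : ℕ∞) Y) :
    ∀ (t : ℝ) (m : E),
      HasDerivAt (fun u => AdFlow ν νinv Y u m)
        ((fderiv ℝ (flowW ν νinv t) m) (AdFlow ν νinv Y t m)
          - (fderiv ℝ (AdFlow ν νinv Y t) m) (flowW ν νinv t m)) t :=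
  stmt15_general ν νinv hν hνinv hinv1 hinv2 Y hY
end

section
/- Let C: [a,b] → V be continuously differentiable and suppose there exist continuous functions h, g: [a,b] → ℝ such that ‖Ċ(t)‖ ≤ h(t)·‖C(t)‖ + g(t) for all t ∈ [a,b]. Then for all s, t ∈ [a,b]: ‖C(t)‖ ≤ ‖C(s)‖ · exp(∫_{J(s,t)} h(σ) dσ) + ∫_{J(s,t)} g(σ) · exp(∫_{J(σ,t)} h(σ′) dσ′) dσ. -/
/-!
Compare `‖C‖` with the solution `B` of the linear equation `B' = h B + g`,
`B(s) = ‖C(s)‖`, given by variation of constants. For `B' = h B + g + ε` the comparison is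
strict and the fencing theorem (`image_norm_le_of_norm_deriv_right_lt_deriv_boundary`) gives
`‖C‖ ≤ B` to the right of `s`; letting `ε → 0` removes the perturbation. To the left of `s`,
apply the same argument to `x ↦ C (-x)`.
-/

open MeasureTheory Set Filter Real

theorem ContinuousOn.exists_continuous_eqOn_Icc {α β : Type*} [LinearOrder α] [TopologicalSpace α]
    [OrderTopology α] [TopologicalSpace β] {f : α → β} {a b : α} (hab : a ≤ b)
    (hf : ContinuousOn f (Icc a b)) : ∃ F : α → β, Continuous F ∧ EqOn f F (Icc a b) :=
  ⟨IccExtend hab ((Icc a b).domRestrict f), continuous_IccExtend_iff.2 hf.domRestrict,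
    fun _ hx => (IccExtend_of_mem hab ((Icc a b).domRestrict f) hx).symm⟩

theorem setIntegral_uIcc_of_le {E : Type*} [NormedAddCommGroup E] [NormedSpace ℝ E] (f : ℝ → E)
    {x y : ℝ} (hxy : x ≤ y) : ∫ σ in uIcc x y, f σ = ∫ σ in x..y, f σ := by
  rw [uIcc_of_le hxy, integral_Icc_eq_integral_Ioc, intervalIntegral.integral_of_le hxy]

/-- The solution of `B' = h B + g`, `B a = δ`, by variation of constants. -/
noncomputable def varGronwallBound (h g : ℝ → ℝ) (a δ x : ℝ) : ℝ :=
  exp (∫ u in a..x, h u) * (δ + ∫ u in a..x, g u * exp (-∫ v in a..u, h v))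

section VarGronwallBound

variable {h g : ℝ → ℝ} {a δ : ℝ}

theorem varGronwallBound_self : varGronwallBound h g a δ a = δ := by
  simp [varGronwallBound]

theorem hasDerivAt_varGronwallBound (hh : Continuous h) (hg : Continuous g) (x : ℝ) :
    HasDerivAt (varGronwallBound h g a δ) (h x * varGronwallBound h g a δ x + g x) x := by
  have hH (y : ℝ) : HasDerivAt (fun u => ∫ v in a..u, h v) (h y) y :=
    (hh.integral_hasStrictDerivAt a y).hasDerivAt
  have hHc : Continuous fun u => ∫ v in a..u, h v :=
    continuous_iff_continuousAt.2 fun y => (hH y).continuousAt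
  have hG : HasDerivAt (fun y => ∫ u in a..y, g u * exp (-∫ v in a..u, h v))
      (g x * exp (-∫ v in a..x, h v)) x :=
    ((hg.mul hHc.neg.rexp).integral_hasStrictDerivAt a x).hasDerivAt
  refine ((hH x).exp.mul (hG.const_add δ)).congr_deriv ?_
  rw [varGronwallBound, mul_left_comm _ (g x), ← exp_add, add_neg_cancel, exp_zero]
  ring

theorem varGronwallBound_eq (hh : Continuous h) (b : ℝ) :
    varGronwallBound h g a δ b
      = δ * exp (∫ u in a..b, h u) + ∫ u in a..b, g u * exp (∫ v in u..b, h v) := by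
  have hint (u : ℝ) : IntervalIntegrable h volume a u := hh.intervalIntegrable a u
  rw [varGronwallBound, mul_add, mul_comm, ← intervalIntegral.integral_const_mul]
  congr 1
  refine intervalIntegral.integral_congr fun u _ => ?_
  rw [← intervalIntegral.integral_interval_sub_left (hint b) (hint u), sub_eq_add_neg, exp_add]
  ring

theorem continuous_varGronwallBound_add_const (hh : Continuous h) (hg : Continuous g) (x : ℝ) :
    Continuous fun ε => varGronwallBound h (fun u => g u + ε) a δ x := by
  have hHc : Continuous fun u => ∫ v in a..u, h v :=
    intervalIntegral.continuous_primitive (fun _ _ => hh.intervalIntegrable _ _) a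
  unfold varGronwallBound
  fun_prop

end VarGronwallBound

section Gronwall

variable {E : Type*} [NormedAddCommGroup E] [NormedSpace ℝ E] {h g : ℝ → ℝ} {f f' : ℝ → E}

theorem norm_le_varGronwallBound_of_norm_deriv_right_le {a b δ : ℝ} (hh : Continuous h)
    (hg : Continuous g) (hf : ContinuousOn f (Icc a b))
    (hf' : ∀ x ∈ Ico a b, HasDerivWithinAt f (f' x) (Ici x) x)
    (ha : ‖f a‖ ≤ δ) (bound : ∀ x ∈ Ico a b, ‖f' x‖ ≤ h x * ‖f x‖ + g x) :
    ∀ x ∈ Icc a b, ‖f x‖ ≤ varGronwallBound h g a δ x := by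
  intro x hx
  have hε : ∀ ε > 0, ‖f x‖ ≤ varGronwallBound h (fun u => g u + ε) a δ x := fun ε hε =>
    image_norm_le_of_norm_deriv_right_lt_deriv_boundary hf hf' (by rwa [varGronwallBound_self])
      (hasDerivAt_varGronwallBound (g := fun u => g u + ε) hh (by fun_prop))
      (fun y hy hfy => by rw [← hfy]; linarith [bound y hy]) hx
  have hlim := (continuous_varGronwallBound_add_const (a := a) (δ := δ) hh hg x).tendsto 0
  simp only [add_zero] at hlim
  exact ge_of_tendsto (hlim.mono_left nhdsWithin_le_nhds)
    (eventually_nhdsWithin_of_forall (s := Ioi 0) hε)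

theorem norm_right_le_of_norm_deriv_right_le {a b : ℝ} (hh : Continuous h) (hg : Continuous g)
    (hab : a ≤ b) (hf : ContinuousOn f (Icc a b))
    (hf' : ∀ x ∈ Ico a b, HasDerivWithinAt f (f' x) (Ici x) x)
    (bound : ∀ x ∈ Ico a b, ‖f' x‖ ≤ h x * ‖f x‖ + g x) :
    ‖f b‖ ≤ ‖f a‖ * exp (∫ u in a..b, h u) + ∫ u in a..b, g u * exp (∫ v in u..b, h v) := by
  rw [← varGronwallBound_eq hh]
  exact norm_le_varGronwallBound_of_norm_deriv_right_le hh hg hf hf' le_rfl bound b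
    (right_mem_Icc.2 hab)

theorem norm_left_le_of_norm_deriv_left_le {a b : ℝ} (hh : Continuous h) (hg : Continuous g)
    (hab : a ≤ b) (hf : ContinuousOn f (Icc a b))
    (hf' : ∀ x ∈ Ioc a b, HasDerivWithinAt f (f' x) (Iic x) x)
    (bound : ∀ x ∈ Ioc a b, ‖f' x‖ ≤ h x * ‖f x‖ + g x) :
    ‖f a‖ ≤ ‖f b‖ * exp (∫ u in a..b, h u) + ∫ u in a..b, g u * exp (∫ v in a..u, h v) := by
  have hmaps : MapsTo Neg.neg (Icc (-b) (-a)) (Icc a b) := fun x hx =>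
    ⟨le_neg_of_le_neg hx.2, neg_le_of_neg_le hx.1⟩
  have key := norm_right_le_of_norm_deriv_right_le (f := fun x => f (-x))
    (f' := fun x => (-1 : ℝ) • f' (-x)) (hh.comp continuous_neg) (hg.comp continuous_neg)
    (neg_le_neg hab) (hf.comp continuous_neg.continuousOn hmaps)
    (fun x hx => (hf' (-x) ⟨lt_neg_of_lt_neg hx.2, neg_le_of_neg_le hx.1⟩).scomp x
      (hasDerivWithinAt_neg x (Ici x)) fun z hz => neg_le_neg (mem_Ici.1 hz))
    (fun x hx => by
      simpa using bound (-x) ⟨lt_neg_of_lt_neg hx.2, neg_le_of_neg_le hx.1⟩)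
  have houter := intervalIntegral.integral_comp_neg (a := -b) (b := -a)
    fun w => g w * exp (∫ v in a..w, h v)
  simp only [neg_neg] at houter
  simpa [Function.comp_def, intervalIntegral.integral_comp_neg, houter] using key

variable {s t : ℝ}

theorem norm_le_of_norm_deriv_le_uIcc_of_continuous (hh : Continuous h) (hg : Continuous g)
    (hf : ∀ x ∈ uIcc s t, HasDerivWithinAt f (f' x) (uIcc s t) x)
    (bound : ∀ x ∈ uIcc s t, ‖f' x‖ ≤ h x * ‖f x‖ + g x) :
    ‖f t‖ ≤ ‖f s‖ * exp (∫ σ in uIcc s t, h σ)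
      + ∫ σ in uIcc s t, g σ * exp (∫ σ' in uIcc σ t, h σ') := by
  have hcont : ContinuousOn f (uIcc s t) := fun x hx => (hf x hx).continuousWithinAt
  rcases le_total s t with hst | hts
  · have key := norm_right_le_of_norm_deriv_right_le hh hg hst (uIcc_of_le hst ▸ hcont)
      (fun x hx => (hf x (uIcc_of_le hst ▸ Ico_subset_Icc_self hx)).mono_of_mem_nhdsWithin
        (uIcc_of_le hst ▸ Icc_mem_nhdsGE_of_mem hx))
      (fun x hx => bound x (uIcc_of_le hst ▸ Ico_subset_Icc_self hx))
    rw [setIntegral_uIcc_of_le _ hst, setIntegral_uIcc_of_le _ hst]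
    refine key.trans_eq (congrArg _ (intervalIntegral.integral_congr fun σ hσ => ?_))
    rw [uIcc_of_le hst] at hσ
    rw [setIntegral_uIcc_of_le _ hσ.2]
  · have key := norm_left_le_of_norm_deriv_left_le hh hg hts (uIcc_of_ge hts ▸ hcont)
      (fun x hx => (hf x (uIcc_of_ge hts ▸ Ioc_subset_Icc_self hx)).mono_of_mem_nhdsWithin
        (uIcc_of_ge hts ▸ Icc_mem_nhdsLE_of_mem hx))
      (fun x hx => bound x (uIcc_of_ge hts ▸ Ioc_subset_Icc_self hx))
    rw [uIcc_comm s t, setIntegral_uIcc_of_le _ hts, setIntegral_uIcc_of_le _ hts]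
    refine key.trans_eq (congrArg _ (intervalIntegral.integral_congr fun σ hσ => ?_))
    rw [uIcc_of_le hts] at hσ
    rw [uIcc_comm σ t, setIntegral_uIcc_of_le _ hσ.1]

theorem norm_le_of_norm_deriv_le_uIcc (hh : ContinuousOn h (uIcc s t))
    (hg : ContinuousOn g (uIcc s t))
    (hf : ∀ x ∈ uIcc s t, HasDerivWithinAt f (f' x) (uIcc s t) x)
    (bound : ∀ x ∈ uIcc s t, ‖f' x‖ ≤ h x * ‖f x‖ + g x) :
    ‖f t‖ ≤ ‖f s‖ * exp (∫ σ in uIcc s t, h σ)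
      + ∫ σ in uIcc s t, g σ * exp (∫ σ' in uIcc σ t, h σ') := by
  obtain ⟨H, hHc, hhH⟩ := hh.exists_continuous_eqOn_Icc inf_le_sup
  obtain ⟨G, hGc, hgG⟩ := hg.exists_continuous_eqOn_Icc inf_le_sup
  have hinner : ∀ σ ∈ uIcc s t, ∫ σ' in uIcc σ t, h σ' = ∫ σ' in uIcc σ t, H σ' := fun σ hσ =>
    setIntegral_congr_fun measurableSet_uIcc (hhH.mono (uIcc_subset_uIcc hσ right_mem_uIcc))
  have houter : ∫ σ in uIcc s t, g σ * exp (∫ σ' in uIcc σ t, h σ')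
      = ∫ σ in uIcc s t, G σ * exp (∫ σ' in uIcc σ t, H σ') :=
    setIntegral_congr_fun measurableSet_uIcc fun σ hσ => by rw [hgG hσ, hinner σ hσ]
  rw [hinner s left_mem_uIcc, houter]
  refine norm_le_of_norm_deriv_le_uIcc_of_continuous hHc hGc hf fun x hx => ?_
  rw [← hhH hx, ← hgG hx]
  exact bound x hx

end Gronwall

theorem stmt19_general {V : Type*} [NormedAddCommGroup V] [NormedSpace ℝ V]
    (a b : ℝ) (C C' : ℝ → V) (h g : ℝ → ℝ)
    (hh : ContinuousOn h (Set.Icc a b)) (hg : ContinuousOn g (Set.Icc a b))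
    (hC : ∀ t ∈ Set.Icc a b, HasDerivWithinAt C (C' t) (Set.Icc a b) t)
    (hbound : ∀ t ∈ Set.Icc a b, ‖C' t‖ ≤ h t * ‖C t‖ + g t) :
    ∀ s ∈ Set.Icc a b, ∀ t ∈ Set.Icc a b,
      ‖C t‖ ≤ ‖C s‖ * Real.exp (∫ σ in Set.uIcc s t, h σ)
        + ∫ σ in Set.uIcc s t, g σ * Real.exp (∫ σ' in Set.uIcc σ t, h σ') := by
  intro s hs t ht
  have hJ : uIcc s t ⊆ Icc a b := uIcc_subset_Icc hs ht
  exact norm_le_of_norm_deriv_le_uIcc (hh.mono hJ) (hg.mono hJ)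
    (fun x hx => (hC x (hJ hx)).mono hJ) fun x hx => hbound x (hJ hx)

/-- Gronwall: if `C : [a,b] → V` is `C¹` and
`‖Ċ(t)‖ ≤ h(t)‖C(t)‖ + g(t)` with `h, g` continuous, then for all `s, t ∈ [a,b]`:
`‖C(t)‖ ≤ ‖C(s)‖ exp(∫_{J(s,t)} h) + ∫_{J(s,t)} g(σ) exp(∫_{J(σ,t)} h) dσ`,
where `J(s,t) = [min(s,t), max(s,t)]`. -/
theorem stmt19 {V : Type*} [NormedAddCommGroup V] [NormedSpace ℝ V]
    (a b : ℝ) (hab : a < b) (C C' : ℝ → V) (h g : ℝ → ℝ)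
    (hh : ContinuousOn h (Set.Icc a b)) (hg : ContinuousOn g (Set.Icc a b))
    (hC : ∀ t ∈ Set.Icc a b, HasDerivWithinAt C (C' t) (Set.Icc a b) t)
    (hC'cont : ContinuousOn C' (Set.Icc a b))
    (hbound : ∀ t ∈ Set.Icc a b, ‖C' t‖ ≤ h t * ‖C t‖ + g t) :
    ∀ s ∈ Set.Icc a b, ∀ t ∈ Set.Icc a b,
      ‖C t‖ ≤ ‖C s‖ * Real.exp (∫ σ in Set.uIcc s t, h σ)
        + ∫ σ in Set.uIcc s t, g σ * Real.exp (∫ σ' in Set.uIcc σ t, h σ') :=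
  stmt19_general a b C C' h g hh hg hC hbound
end
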